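/- arXiv:1305.5797 — 6 statements merged into one kernel-verified Lean document; each statement's English description precedes it below -/
import Mathlib

section
/- If Q is Lipschitz equicontinuous and has the shrinking property, then Q is weakly contracting. -/
/-!
Fix `ρ > 0` and the corresponding `α`. Apply the shrinking property to a compact `E`, then to the
compact `F` it returns, and so on `k` times, choosing `η, κ` so that `η γ(u) + κ osc(u) ≤ αρ`
whenever `γ(u) ≤ 1` (here `osc(u) ≤ diam K` since `K` is bounded). Each step costs at most `2αρ` and
multiplies the previous bound by `1 - α`, so for large `n` and `γ(u) ≤ 1`,
`osc_E(Tⁿu) ≤ 2ρ + (1 - α)ᵏ diam K`. With `E = {x, y}` this bounds `Tⁿu(x) - Tⁿu(y)` uniformly over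
`u ∈ Lip₁[K]`.
-/

open MeasureTheory ProbabilityTheory Filter Topology

/-- The oscillation of `u` over a set `E`: `sup {u x - u y : x, y ∈ E}`. -/
noncomputable def oscOn {K : Type*} (u : K → ℝ) (E : Set K) : ℝ :=
  sSup {d : ℝ | ∃ x ∈ E, ∃ y ∈ E, d = u x - u y}

/-- The oscillation of `u` over the whole space. -/
noncomputable def osc {K : Type*} (u : K → ℝ) : ℝ :=
  oscOn u Set.univ

/-- The (smallest) Lipschitz constant `γ(u)` of `u`. -/
noncomputable def lipConst {K : Type*} [MetricSpace K] (u : K → ℝ) : ℝ :=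
  sInf {c : ℝ | 0 ≤ c ∧ ∀ x y, |u x - u y| ≤ c * dist x y}

/-- `u ∈ Lip[K]`: `u` is bounded and Lipschitz continuous. -/
def MemLip {K : Type*} [MetricSpace K] (u : K → ℝ) : Prop :=
  (∃ C : ℝ, ∀ x, |u x| ≤ C) ∧ (∃ c : ℝ, 0 ≤ c ∧ ∀ x y, |u x - u y| ≤ c * dist x y)

/-- `u ∈ Lip₁[K]`: `u` is bounded and Lipschitz with constant at most `1`. -/
def MemLip1 {K : Type*} [MetricSpace K] (u : K → ℝ) : Prop :=
  (∃ C : ℝ, ∀ x, |u x| ≤ C) ∧ ∀ x y, |u x - u y| ≤ dist x y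

/-- Iterates of a Markov kernel: `kiter Q 0 = id`, `kiter Q (n+1) = Q ∘ₖ kiter Q n`, so that
`kiter Q n x = Qⁿ(x, ·)`. -/
noncomputable def kiter {K : Type*} [MeasurableSpace K] (Q : Kernel K K) : ℕ → Kernel K K
  | 0 => Kernel.id
  | n + 1 => Q ∘ₖ kiter Q n

/-- The `n`-step transition operator `Tⁿu(x) = ∫_K u(y) Qⁿ(x, dy)`. -/
noncomputable def Tn {K : Type*} [MeasurableSpace K] (Q : Kernel K K) (n : ℕ)
    (u : K → ℝ) (x : K) : ℝ :=
  ∫ y, u y ∂(kiter Q n x)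

/-- `Q` is Lipschitz equicontinuous: there is `C > 0` with `γ(Tⁿu) ≤ C γ(u)` for
all `n ≥ 1` and all bounded Lipschitz `u`. -/
def LipEquicont {K : Type*} [MetricSpace K] [MeasurableSpace K] (Q : Kernel K K) : Prop :=
  ∃ C : ℝ, 0 < C ∧ ∀ n : ℕ, 1 ≤ n → ∀ u : K → ℝ, MemLip u →
    lipConst (Tn Q n u) ≤ C * lipConst u

/-- `Q` has the shrinking property. -/
def ShrinkingProperty {K : Type*} [MetricSpace K] [MeasurableSpace K] (Q : Kernel K K) : Prop :=
  ∀ ρ : ℝ, 0 < ρ → ∃ α : ℝ, 0 < α ∧ α < 1 ∧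
    ∀ E : Set K, E.Nonempty → IsCompact E → ∀ η : ℝ, 0 < η → ∀ κ : ℝ, 0 < κ →
      ∃ N : ℕ, ∃ F : Set K, F.Nonempty ∧ IsCompact F ∧
        ∀ n : ℕ, N ≤ n → ∀ u : K → ℝ, MemLip u →
          oscOn (Tn Q n u) E ≤
            η * lipConst u + κ * osc u + α * ρ * lipConst u
              + (1 - α) * oscOn (Tn Q (n - N) u) F

/-- `Q` has the strong shrinking property. -/
def StrongShrinkingProperty {K : Type*} [MetricSpace K] [MeasurableSpace K]
    (Q : Kernel K K) : Prop :=
  ∀ ρ : ℝ, 0 < ρ → ∃ α : ℝ, 0 < α ∧ α < 1 ∧ ∃ N : ℕ,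
    ∀ n : ℕ, N ≤ n → ∀ u : K → ℝ, MemLip u →
      osc (Tn Q n u) ≤ α * ρ * lipConst u + (1 - α) * osc (Tn Q (n - N) u)

/-- `Q` is weakly contracting: for all `x, y`,
`sup {∫ u dQⁿ(x,·) − ∫ u dQⁿ(y,·) : u ∈ Lip₁[K]} → 0`. -/
def WeaklyContracting {K : Type*} [MetricSpace K] [MeasurableSpace K] (Q : Kernel K K) : Prop :=
  ∀ x y : K,
    Filter.Tendsto
      (fun n : ℕ => sSup {d : ℝ | ∃ u : K → ℝ, MemLip1 u ∧ d = Tn Q n u x - Tn Q n u y})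
      Filter.atTop (nhds 0)

/-- `Q` is weakly ergodic: weakly contracting, and there is a probability measure `π` with
`∫ u dQⁿ(x,·) → ∫ u dπ` for every bounded continuous `u` and every `x`. -/
def WeaklyErgodic {K : Type*} [MetricSpace K] [MeasurableSpace K] (Q : Kernel K K) : Prop :=
  WeaklyContracting Q ∧
    ∃ π : Measure K, IsProbabilityMeasure π ∧
      ∀ u : K → ℝ, Continuous u → (∃ C : ℝ, ∀ x, |u x| ≤ C) →
        ∀ x : K, Filter.Tendsto (fun n : ℕ => Tn Q n u x) Filter.atTop (nhds (∫ y, u y ∂π))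

section Oscillation

variable {K : Type*} {u : K → ℝ} {E : Set K}

lemma sub_le_oscOn {C : ℝ} (hC : ∀ a b, u a - u b ≤ C) {a b : K} (ha : a ∈ E) (hb : b ∈ E) :
    u a - u b ≤ oscOn u E :=
  le_csSup ⟨C, by rintro _ ⟨a, -, b, -, rfl⟩; exact hC a b⟩ ⟨a, ha, b, hb, rfl⟩

lemma oscOn_le {c : ℝ} (hE : E.Nonempty) (h : ∀ a ∈ E, ∀ b ∈ E, u a - u b ≤ c) :
    oscOn u E ≤ c := by
  obtain ⟨z, hz⟩ := hE
  refine csSup_le ⟨0, z, hz, z, hz, (sub_self _).symm⟩ ?_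
  rintro _ ⟨a, ha, b, hb, rfl⟩
  exact h a ha b hb

end Oscillation

lemma integral_sub_integral_le {K : Type*} [MeasurableSpace K] {u : K → ℝ} {c : ℝ}
    {μ ν : Measure K} [IsProbabilityMeasure μ] [IsProbabilityMeasure ν]
    (hμ : Integrable u μ) (hν : Integrable u ν) (h : ∀ a b, u a - u b ≤ c) :
    (∫ a, u a ∂μ) - ∫ b, u b ∂ν ≤ c := by
  have hle : ∀ b, (∫ a, u a ∂μ) - c ≤ u b := fun b => by
    have := integral_mono hμ (integrable_const (u b + c)) fun a => by linarith [h a b]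
    simp only [integral_const, probReal_univ, one_smul] at this
    linarith
  have := integral_mono (integrable_const _) hν hle
  simp only [integral_const, probReal_univ, one_smul] at this
  linarith

namespace MemLip

variable {K : Type*} [MetricSpace K] {u : K → ℝ}

lemma abs_sub_le (hu : MemLip u) (x y : K) : |u x - u y| ≤ lipConst u * dist x y := by
  rcases eq_or_ne x y with rfl | hxy
  · simp
  · have hd : 0 < dist x y := dist_pos.2 hxy
    rw [← div_le_iff₀ hd]
    exact le_csInf hu.2 fun c hc => (div_le_iff₀ hd).2 (hc.2 x y)

lemma sub_le_osc (hu : MemLip u) (a b : K) : u a - u b ≤ osc u := by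
  obtain ⟨C, hC⟩ := hu.1
  exact sub_le_oscOn (C := C + C) (fun a b => by linarith [abs_le.1 (hC a), abs_le.1 (hC b)])
    trivial trivial

lemma osc_le_diam (hbdd : Bornology.IsBounded (Set.univ : Set K)) [Nonempty K]
    (hu : MemLip u) (h1 : lipConst u ≤ 1) : osc u ≤ Metric.diam (Set.univ : Set K) := by
  refine oscOn_le Set.univ_nonempty fun a _ b _ => ?_
  calc u a - u b ≤ lipConst u * dist a b := (le_abs_self _).trans (hu.abs_sub_le a b)
    _ ≤ 1 * dist a b := mul_le_mul_of_nonneg_right h1 dist_nonneg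
    _ ≤ Metric.diam (Set.univ : Set K) := by
      rw [one_mul]; exact Metric.dist_le_diam_of_mem hbdd trivial trivial

lemma continuous (hu : MemLip u) : Continuous u := by
  obtain ⟨c, hc0, hc⟩ := hu.2
  exact (LipschitzWith.of_dist_le_mul (K := ⟨c, hc0⟩) fun x y => by
    rw [Real.dist_eq]; exact hc x y).continuous

lemma integrable [MeasurableSpace K] [OpensMeasurableSpace K] (hu : MemLip u)
    (μ : Measure K) [IsFiniteMeasure μ] : Integrable u μ := by
  obtain ⟨C, hC⟩ := hu.1
  exact Integrable.of_bound hu.continuous.measurable.aestronglyMeasurable C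
    (Eventually.of_forall hC)

end MemLip

lemma MemLip1.memLip {K : Type*} [MetricSpace K] {u : K → ℝ} (hu : MemLip1 u) : MemLip u :=
  ⟨hu.1, 1, zero_le_one, fun x y => by simpa using hu.2 x y⟩

lemma MemLip1.lipConst_le_one {K : Type*} [MetricSpace K] {u : K → ℝ} (hu : MemLip1 u) :
    lipConst u ≤ 1 :=
  csInf_le ⟨0, fun _ hc => hc.1⟩ ⟨zero_le_one, fun x y => by simpa using hu.2 x y⟩

section Transition

variable {K : Type*} [MetricSpace K] [MeasurableSpace K] [OpensMeasurableSpace K]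
  {Q : Kernel K K} [IsMarkovKernel Q] {u : K → ℝ}

instance isMarkovKernel_kiter (Q : Kernel K K) [IsMarkovKernel Q] (n : ℕ) :
    IsMarkovKernel (kiter Q n) := by
  induction n with
  | zero => rw [kiter]; infer_instance
  | succ n ih => rw [kiter]; infer_instance

lemma MemLip.Tn_sub_le_osc (hu : MemLip u) (n : ℕ) (a b : K) :
    Tn Q n u a - Tn Q n u b ≤ osc u :=
  integral_sub_integral_le (hu.integrable _) (hu.integrable _) hu.sub_le_osc

lemma MemLip.oscOn_Tn_le_osc (hu : MemLip u) (n : ℕ) {E : Set K} (hE : E.Nonempty) :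
    oscOn (Tn Q n u) E ≤ osc u :=
  oscOn_le hE fun a _ b _ => hu.Tn_sub_le_osc n a b

lemma ShrinkingProperty.oscOn_Tn_le_iterate (hbdd : Bornology.IsBounded (Set.univ : Set K))
    (hshrink : ShrinkingProperty Q) {ρ : ℝ} (hρ : 0 < ρ) :
    ∃ α : ℝ, 0 < α ∧ α < 1 ∧ ∀ k : ℕ, ∀ E : Set K, E.Nonempty → IsCompact E →
      ∃ M : ℕ, ∀ n ≥ M, ∀ u : K → ℝ, MemLip u → lipConst u ≤ 1 →
        oscOn (Tn Q n u) E ≤ 2 * ρ + (1 - α) ^ k * Metric.diam (Set.univ : Set K) := by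
  set D := Metric.diam (Set.univ : Set K)
  have hD : 0 ≤ D := Metric.diam_nonneg
  obtain ⟨α, hα0, hα1, hsh⟩ := hshrink ρ hρ
  refine ⟨α, hα0, hα1, fun k => ?_⟩
  induction k with
  | zero =>
    intro E hE _
    have : Nonempty K := ⟨hE.some⟩
    refine ⟨0, fun n _ u hu h1 => ?_⟩
    linarith [hu.oscOn_Tn_le_osc n (Q := Q) hE, hu.osc_le_diam hbdd h1]
  | succ k ih =>
    intro E hE hEc
    have : Nonempty K := ⟨hE.some⟩
    set κ := α * ρ / (2 * (D + 1))
    have hκ : 0 < κ := by positivity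
    have hκD : κ * (D + 1) = α * ρ / 2 := by
      simp only [κ]; field_simp
    obtain ⟨N, F, hF, hFc, hN⟩ := hsh E hE hEc (α * ρ / 2) (by positivity) κ hκ
    obtain ⟨M, hM⟩ := ih F hF hFc
    refine ⟨N + M, fun n hn u hu h1 => ?_⟩
    have e1 : α * ρ / 2 * lipConst u ≤ α * ρ / 2 := mul_le_of_le_one_right (by positivity) h1
    have e2 : κ * osc u ≤ κ * (D + 1) :=
      mul_le_mul_of_nonneg_left (by linarith [hu.osc_le_diam hbdd h1]) hκ.le
    have e3 : α * ρ * lipConst u ≤ α * ρ := mul_le_of_le_one_right (by positivity) h1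
    have e4 : (1 - α) * oscOn (Tn Q (n - N) u) F ≤ (1 - α) * (2 * ρ + (1 - α) ^ k * D) :=
      mul_le_mul_of_nonneg_left (hM (n - N) (by omega) u hu h1) (by linarith)
    calc oscOn (Tn Q n u) E
        ≤ α * ρ / 2 + κ * (D + 1) + α * ρ + (1 - α) * (2 * ρ + (1 - α) ^ k * D) := by
          linarith [hN n (by omega) u hu]
      _ = 2 * ρ + (1 - α) ^ (k + 1) * D := by rw [hκD]; ring

lemma ShrinkingProperty.eventually_oscOn_Tn_le (hbdd : Bornology.IsBounded (Set.univ : Set K))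
    (hshrink : ShrinkingProperty Q) {ε : ℝ} (hε : 0 < ε) {E : Set K} (hE : E.Nonempty)
    (hEc : IsCompact E) :
    ∃ M : ℕ, ∀ n ≥ M, ∀ u : K → ℝ, MemLip1 u → oscOn (Tn Q n u) E ≤ ε := by
  obtain ⟨α, hα0, hα1, hiter⟩ := hshrink.oscOn_Tn_le_iterate hbdd (ρ := ε / 4) (by positivity)
  have hpow := (tendsto_pow_atTop_nhds_zero_of_lt_one (r := 1 - α) (by linarith)
    (by linarith)).mul_const (Metric.diam (Set.univ : Set K))
  obtain ⟨k, hk⟩ := (hpow.eventually (gt_mem_nhds (by linarith : 0 * _ < ε / 2))).exists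
  obtain ⟨M, hM⟩ := hiter k E hE hEc
  exact ⟨M, fun n hn u hu => by linarith [hM n hn u hu.memLip hu.lipConst_le_one]⟩

end Transition

theorem stmt_1_general {K : Type*} [MetricSpace K] [MeasurableSpace K] [BorelSpace K]
    (hbdd : Bornology.IsBounded (Set.univ : Set K))
    (Q : Kernel K K) [IsMarkovKernel Q]
    (hshrink : ShrinkingProperty Q) :
    WeaklyContracting Q := by
  intro x y
  rw [Metric.tendsto_atTop]
  intro ε hε
  obtain ⟨M, hM⟩ := hshrink.eventually_oscOn_Tn_le hbdd (half_pos hε) (E := {x, y})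
    (Set.insert_nonempty x {y}) ((Set.finite_singleton y).insert x).isCompact
  refine ⟨M, fun n hn => ?_⟩
  set S := {d : ℝ | ∃ u : K → ℝ, MemLip1 u ∧ d = Tn Q n u x - Tn Q n u y}
  have hS : ∀ d ∈ S, d ≤ ε / 2 := by
    rintro _ ⟨u, hu, rfl⟩
    exact (sub_le_oscOn (hu.memLip.Tn_sub_le_osc n) (by simp) (by simp)).trans (hM n hn u hu)
  have h0 : (0 : ℝ) ∈ S := ⟨0, ⟨⟨0, by simp⟩, by simp⟩, by simp [Tn]⟩
  have hlow := le_csSup ⟨_, hS⟩ h0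
  have hup := csSup_le ⟨_, h0⟩ hS
  rw [Real.dist_eq, sub_zero, abs_lt]
  constructor <;> linarith

/-- If `Q` is Lipschitz equicontinuous and has the shrinking property,
then `Q` is weakly contracting. -/
theorem stmt_1 {K : Type*} [MetricSpace K] [CompleteSpace K]
    [TopologicalSpace.SeparableSpace K] [MeasurableSpace K] [BorelSpace K]
    (hbdd : Bornology.IsBounded (Set.univ : Set K))
    (Q : Kernel K K) [IsMarkovKernel Q]
    (hlip : LipEquicont Q) (hshrink : ShrinkingProperty Q) :
    WeaklyContracting Q :=
  stmt_1_general hbdd Q hshrink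
end

section
/- If Q has the shrinking property and is Lipschitz equicontinuous, then for every nonempty compact set E ⊆ K and every ε > 0 there is an integer N such that for every u ∈ Lip₁[K] and every n ≥ N, sup_{x,y ∈ E} |∫ u dQⁿ(x,·) − ∫ u dQⁿ(y,·)| ≤ ε. -/
open MeasureTheory ProbabilityTheory Filter Topology

/-! The shrinking property, with its error parameters taken small, says that on `Lip₁[K]` the
oscillation of `Tⁿu` on a compact set is at most `α ε / 2` plus `1 - α` times the oscillation of
an earlier iterate on another compact set. Iterating `k` times bounds the oscillation on `E` by
`α ε / 2 · ∑ (1 - α)ʲ ≤ ε / 2` plus `(1 - α)ᵏ` times an oscillation that never exceeds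
`2 diam K`; for large `k` this is at most `ε`. -/

theorem exists_le_geom_sum_mul_add_pow_mul {X ι : Type*} (P : X → Prop) (f : ι → ℕ → X → ℝ)
    {B c : ℝ} (hc : 0 ≤ c)
    (hstep : ∀ F, P F → ∃ N : ℕ, ∃ F', P F' ∧
      ∀ n, N ≤ n → ∀ i, f i n F ≤ B + c * f i (n - N) F')
    (k : ℕ) {E : X} (hE : P E) :
    ∃ N : ℕ, ∃ F, P F ∧
      ∀ n, N ≤ n → ∀ i, f i n E ≤ B * ∑ j ∈ Finset.range k, c ^ j + c ^ k * f i (n - N) F := by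
  induction k with
  | zero => exact ⟨0, E, hE, fun n _ i => by simp⟩
  | succ k ih =>
    obtain ⟨N, F, hF, hN⟩ := ih
    obtain ⟨N', F', hF', hN'⟩ := hstep F hF
    refine ⟨N + N', F', hF', fun n hn i => ?_⟩
    have hnext := hN' (n - N) (by omega) i
    rw [Nat.sub_sub] at hnext
    calc f i n E ≤ B * ∑ j ∈ Finset.range k, c ^ j + c ^ k * f i (n - N) F := hN n (by omega) i
      _ ≤ B * ∑ j ∈ Finset.range k, c ^ j + c ^ k * (B + c * f i (n - (N + N')) F') := by gcongr
      _ = B * ∑ j ∈ Finset.range (k + 1), c ^ j + c ^ (k + 1) * f i (n - (N + N')) F' := by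
        rw [Finset.sum_range_succ]; ring

theorem exists_le_div_add_pow_mul {X ι : Type*} (P : X → Prop) (f : ι → ℕ → X → ℝ)
    {B c : ℝ} (hB : 0 ≤ B) (hc : 0 ≤ c) (hc1 : c < 1)
    (hstep : ∀ F, P F → ∃ N : ℕ, ∃ F', P F' ∧
      ∀ n, N ≤ n → ∀ i, f i n F ≤ B + c * f i (n - N) F')
    (k : ℕ) {E : X} (hE : P E) :
    ∃ N : ℕ, ∃ F, P F ∧ ∀ n, N ≤ n → ∀ i, f i n E ≤ B / (1 - c) + c ^ k * f i (n - N) F := by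
  obtain ⟨N, F, hF, hN⟩ := exists_le_geom_sum_mul_add_pow_mul P f hc hstep k hE
  have hgeom : ∑ j ∈ Finset.range k, c ^ j ≤ 1 / (1 - c) := by
    simpa [← Finset.range_eq_Ico] using geom_sum_Ico_le_of_lt_one (m := 0) (n := k) hc hc1
  refine ⟨N, F, hF, fun n hn i => (hN n hn i).trans ?_⟩
  grw [hgeom, mul_one_div]

theorem oscOn_le_s5 {K : Type*} {u : K → ℝ} {E : Set K} {M : ℝ} (hM : 0 ≤ M)
    (h : ∀ x ∈ E, ∀ y ∈ E, u x - u y ≤ M) : oscOn u E ≤ M :=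
  Real.sSup_le (by rintro d ⟨x, hx, y, hy, rfl⟩; exact h x hx y hy) hM

theorem abs_sub_le_of_oscOn_le {K : Type*} {u : K → ℝ} {E : Set K} {M ε : ℝ}
    (hM : ∀ x ∈ E, ∀ y ∈ E, u x - u y ≤ M) (hosc : oscOn u E ≤ ε)
    {x y : K} (hx : x ∈ E) (hy : y ∈ E) : |u x - u y| ≤ ε := by
  have hbdd : BddAbove {d : ℝ | ∃ x ∈ E, ∃ y ∈ E, d = u x - u y} := by
    refine ⟨M, ?_⟩
    rintro d ⟨a, ha, b, hb, rfl⟩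
    exact hM a ha b hb
  rw [abs_sub_le_iff]
  exact ⟨(le_csSup hbdd ⟨x, hx, y, hy, rfl⟩).trans hosc,
    (le_csSup hbdd ⟨y, hy, x, hx, rfl⟩).trans hosc⟩

section MetricSpace

variable {K : Type*} [MetricSpace K]

theorem lipConst_nonneg (u : K → ℝ) : 0 ≤ lipConst u :=
  Real.sInf_nonneg fun _ hc => hc.1

namespace MemLip1

theorem memLip_s5 {u : K → ℝ} (hu : MemLip1 u) : MemLip u :=
  ⟨hu.1, 1, zero_le_one, by simpa using hu.2⟩

theorem lipConst_le_one_s5 {u : K → ℝ} (hu : MemLip1 u) : lipConst u ≤ 1 :=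
  csInf_le ⟨0, fun _ hc => hc.1⟩ ⟨zero_le_one, by simpa using hu.2⟩

theorem lipschitzWith {u : K → ℝ} (hu : MemLip1 u) : LipschitzWith 1 u :=
  LipschitzWith.of_dist_le_mul fun x y => by simpa [Real.dist_eq] using hu.2 x y

theorem abs_sub_le_diam {u : K → ℝ} (hu : MemLip1 u)
    (hbdd : Bornology.IsBounded (Set.univ : Set K)) (x y : K) :
    |u x - u y| ≤ Metric.diam (Set.univ : Set K) :=
  (hu.2 x y).trans (Metric.dist_le_diam_of_mem hbdd trivial trivial)

theorem osc_le_diam {u : K → ℝ} (hu : MemLip1 u)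
    (hbdd : Bornology.IsBounded (Set.univ : Set K)) :
    osc u ≤ Metric.diam (Set.univ : Set K) :=
  oscOn_le_s5 Metric.diam_nonneg fun x _ y _ => (le_abs_self _).trans (hu.abs_sub_le_diam hbdd x y)

variable [MeasurableSpace K] [BorelSpace K]

theorem integrable {u : K → ℝ} (hu : MemLip1 u) (μ : Measure K) [IsProbabilityMeasure μ] :
    Integrable u μ := by
  obtain ⟨C, hC⟩ := hu.1
  exact Integrable.mono' (integrable_const C) hu.lipschitzWith.continuous.aestronglyMeasurable
    (ae_of_all _ fun x => by simpa using hC x)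

theorem abs_integral_sub_le_diam {u : K → ℝ} (hu : MemLip1 u)
    (hbdd : Bornology.IsBounded (Set.univ : Set K)) (μ : Measure K) [IsProbabilityMeasure μ]
    (z : K) : |∫ y, u y ∂μ - u z| ≤ Metric.diam (Set.univ : Set K) := by
  have h := norm_integral_le_of_norm_le_const (μ := μ) (f := fun y => u y - u z)
    (ae_of_all _ fun y => hu.abs_sub_le_diam hbdd y z)
  rwa [integral_sub (hu.integrable μ) (integrable_const _), integral_const, probReal_univ,
    one_smul, mul_one] at h

end MemLip1

variable [MeasurableSpace K]

instance kiter.instIsMarkovKernel (Q : Kernel K K) [IsMarkovKernel Q] :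
    ∀ n, IsMarkovKernel (kiter Q n)
  | 0 => by unfold kiter; infer_instance
  | n + 1 => by have := kiter.instIsMarkovKernel Q n; unfold kiter; infer_instance

theorem ShrinkingProperty.exists_oscOn_Tn_le {Q : Kernel K K} (h : ShrinkingProperty Q)
    (hbdd : Bornology.IsBounded (Set.univ : Set K)) {ε : ℝ} (hε : 0 < ε) :
    ∃ α : ℝ, 0 < α ∧ α < 1 ∧ ∀ E : Set K, E.Nonempty ∧ IsCompact E →
      ∃ N : ℕ, ∃ F : Set K, (F.Nonempty ∧ IsCompact F) ∧ ∀ n, N ≤ n →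
        ∀ u : {u : K → ℝ // MemLip1 u},
          oscOn (Tn Q n u) E ≤ α * ε / 2 + (1 - α) * oscOn (Tn Q (n - N) u) F := by
  set D := Metric.diam (Set.univ : Set K)
  -- `ρ = ε / 4`, `η = α ε / 8` and `κ (D + 1) = α ε / 8` keep the total error below `α ε / 2`.
  obtain ⟨α, hα0, hα1, hα⟩ := h (ε / 4) (by positivity)
  refine ⟨α, hα0, hα1, fun E ⟨hE, hEc⟩ => ?_⟩
  have hD : 0 ≤ D := Metric.diam_nonneg
  obtain ⟨N, F, hF, hFc, hN⟩ :=
    hα E hE hEc (α * ε / 8) (by positivity) (α * ε / (8 * (D + 1))) (by positivity)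
  refine ⟨N, F, ⟨hF, hFc⟩, fun n hn ⟨u, hu⟩ => (hN n hn u hu.memLip_s5).trans ?_⟩
  have hγ0 := lipConst_nonneg u
  have hγ1 := hu.lipConst_le_one_s5
  have hosc : α * ε / (8 * (D + 1)) * osc u ≤ α * ε / 8 := by
    calc α * ε / (8 * (D + 1)) * osc u ≤ α * ε / (8 * (D + 1)) * (D + 1) := by
          gcongr; linarith [hu.osc_le_diam hbdd]
      _ = α * ε / 8 := by field_simp
  have : 0 < α * ε := by positivity
  nlinarith

variable [BorelSpace K] {Q : Kernel K K} [IsMarkovKernel Q]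

theorem MemLip1.Tn_sub_Tn_le {u : K → ℝ} (hu : MemLip1 u)
    (hbdd : Bornology.IsBounded (Set.univ : Set K)) (n : ℕ) (x y : K) :
    Tn Q n u x - Tn Q n u y ≤ 2 * Metric.diam (Set.univ : Set K) := by
  have hx := abs_sub_le_iff.1 (hu.abs_integral_sub_le_diam hbdd (kiter Q n x) x)
  have hy := abs_sub_le_iff.1 (hu.abs_integral_sub_le_diam hbdd (kiter Q n y) x)
  simp only [Tn]
  linarith [hx.1, hy.2]

end MetricSpace

theorem stmt_5_general {K : Type*} [MetricSpace K] [MeasurableSpace K] [BorelSpace K]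
    (hbdd : Bornology.IsBounded (Set.univ : Set K))
    (Q : Kernel K K) [IsMarkovKernel Q]
    (hshrink : ShrinkingProperty Q) :
    ∀ E : Set K, E.Nonempty → IsCompact E → ∀ ε : ℝ, 0 < ε →
      ∃ N : ℕ, ∀ u : K → ℝ, MemLip1 u → ∀ n : ℕ, N ≤ n →
        ∀ x ∈ E, ∀ y ∈ E, |Tn Q n u x - Tn Q n u y| ≤ ε := by
  intro E hE hEc ε hε
  set D := Metric.diam (Set.univ : Set K)
  have hD : 0 ≤ D := Metric.diam_nonneg
  obtain ⟨α, hα0, hα1, hstep⟩ := hshrink.exists_oscOn_Tn_le hbdd hε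
  obtain ⟨k, hk⟩ := exists_pow_lt_of_lt_one (x := ε / (2 * (2 * D + 1))) (by positivity)
    (show 1 - α < 1 by linarith)
  obtain ⟨N, F, -, hN⟩ := exists_le_div_add_pow_mul
    (fun F : Set K => F.Nonempty ∧ IsCompact F)
    (fun (u : {u : K → ℝ // MemLip1 u}) n F => oscOn (Tn Q n u) F)
    (by positivity) (by linarith) (by linarith) hstep k ⟨hE, hEc⟩
  refine ⟨N, fun u hu n hn x hx y hy => ?_⟩
  have hF : oscOn (Tn Q (n - N) u) F ≤ 2 * D :=
    oscOn_le_s5 (by positivity) fun a _ b _ => hu.Tn_sub_Tn_le hbdd (n - N) a b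
  have hpow : (1 - α) ^ k * oscOn (Tn Q (n - N) u) F ≤ ε / 2 := by
    calc (1 - α) ^ k * oscOn (Tn Q (n - N) u) F ≤ (1 - α) ^ k * (2 * D + 1) :=
          mul_le_mul_of_nonneg_left (by linarith) (pow_nonneg (by linarith) k)
      _ ≤ ε / (2 * (2 * D + 1)) * (2 * D + 1) := by gcongr
      _ = ε / 2 := by field_simp
  have hbias : α * ε / 2 / (1 - (1 - α)) = ε / 2 := by
    rw [sub_sub_cancel]; field_simp
  refine abs_sub_le_of_oscOn_le (fun a _ b _ => hu.Tn_sub_Tn_le hbdd n a b) ?_ hx hy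
  linarith [hN n hn ⟨u, hu⟩]

/-- If `Q` has the shrinking property and is Lipschitz equicontinuous, then for
every nonempty compact `E` and every `ε > 0` there is `N` such that for every `u ∈ Lip₁[K]` and
all `n ≥ N`, `sup_{x,y ∈ E} |∫ u dQⁿ(x,·) − ∫ u dQⁿ(y,·)| ≤ ε`. -/
theorem stmt_5 {K : Type*} [MetricSpace K] [CompleteSpace K]
    [TopologicalSpace.SeparableSpace K] [MeasurableSpace K] [BorelSpace K]
    (hbdd : Bornology.IsBounded (Set.univ : Set K))
    (Q : Kernel K K) [IsMarkovKernel Q]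
    (hshrink : ShrinkingProperty Q) (hlip : LipEquicont Q) :
    ∀ E : Set K, E.Nonempty → IsCompact E → ∀ ε : ℝ, 0 < ε →
      ∃ N : ℕ, ∀ u : K → ℝ, MemLip1 u → ∀ n : ℕ, N ≤ n →
        ∀ x ∈ E, ∀ y ∈ E, |Tn Q n u x - Tn Q n u y| ≤ ε :=
  stmt_5_general hbdd Q hshrink
end

section
/- Let r > 0 and let μ and ν be measures of total mass r on the space of measures on (S, 𝓕) such that μ-almost every and ν-almost every point is a probability measure absolutely continuous with respect to λ. Then every coupling μ̃ of μ and ν satisfies ∫ δ_TV(z₁, z₂) μ̃(dz₁, dz₂) ≥ δ_TV(b(μ), b(ν)); in particular the Kantorovich distance d_K(μ, ν), defined as the infimum of ∫ δ_TV(z₁, z₂) μ̃(dz₁, dz₂) over all couplings μ̃ of μ and ν, is at least δ_TV(b(μ), b(ν)). -/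
open MeasureTheory
open scoped NNReal ENNReal

/-- The total variation distance between two (finite) measures:
`δ_TV(z₁,z₂) = sup_F (z₁(F) − z₂(F)) + sup_F (z₂(F) − z₁(F))`, `F` measurable. -/
noncomputable def tvDist {S : Type*} [MeasurableSpace S] (z₁ z₂ : Measure S) : ℝ :=
  sSup {d : ℝ | ∃ F : Set S, MeasurableSet F ∧ d = (z₁ F).toReal - (z₂ F).toReal} +
    sSup {d : ℝ | ∃ F : Set S, MeasurableSet F ∧ d = (z₂ F).toReal - (z₁ F).toReal}

/-- The barycenter of a measure `μ` on the space of measures: `b(μ)(F) = ∫ z(F) μ(dz)`. -/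
noncomputable def bary {S : Type*} [MeasurableSpace S] (μ : Measure (Measure S)) : Measure S :=
  μ.bind id

/-!
For measurable sets `F`, `G` the quantity `b(μ)(F) − b(ν)(F) + b(ν)(G) − b(μ)(G)` is linear in
the barycenters, hence equals the `μ̃`-integral of `z₁(F) − z₂(F) + z₂(G) − z₁(G)`, which is at
most `δ_TV(z₁, z₂)` pointwise. Choosing `F`, `G` nearly optimal for the barycenters gives the
inequality up to an arbitrary `ε > 0`.
-/

theorem ofReal_integral_le_lintegral_ofReal {α : Type*} [MeasurableSpace α] {μ : Measure α}
    {f : α → ℝ} (hf : Integrable f μ) :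
    ENNReal.ofReal (∫ a, f a ∂μ) ≤ ∫⁻ a, ENNReal.ofReal (f a) ∂μ :=
  calc ENNReal.ofReal (∫ a, f a ∂μ)
      ≤ ENNReal.ofReal (∫ a, max (f a) 0 ∂μ) :=
        ENNReal.ofReal_le_ofReal (integral_mono hf hf.pos_part fun _ => le_max_left _ _)
    _ = ∫⁻ a, ENNReal.ofReal (max (f a) 0) ∂μ :=
        ofReal_integral_eq_lintegral_ofReal hf.pos_part (ae_of_all _ fun _ => le_max_right _ _)
    _ = ∫⁻ a, ENNReal.ofReal (f a) ∂μ := by simp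

section TotalVariation

variable {S : Type*} [MeasurableSpace S]

theorem sub_add_sub_le_tvDist {z₁ z₂ : Measure S} [IsFiniteMeasure z₁] [IsFiniteMeasure z₂]
    {F G : Set S} (hF : MeasurableSet F) (hG : MeasurableSet G) :
    (z₁ F).toReal - (z₂ F).toReal + ((z₂ G).toReal - (z₁ G).toReal) ≤ tvDist z₁ z₂ := by
  have bdd : ∀ (w₁ w₂ : Measure S) [IsFiniteMeasure w₁],
      BddAbove {d : ℝ | ∃ F : Set S, MeasurableSet F ∧ d = (w₁ F).toReal - (w₂ F).toReal} := by
    rintro w₁ w₂ _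
    refine ⟨(w₁ Set.univ).toReal, ?_⟩
    rintro d ⟨F, -, rfl⟩
    have := measureReal_mono (μ := w₁) (Set.subset_univ F)
    simp only [measureReal_def] at this
    linarith [ENNReal.toReal_nonneg (a := w₂ F)]
  exact add_le_add (le_csSup (bdd z₁ z₂) ⟨F, hF, rfl⟩) (le_csSup (bdd z₂ z₁) ⟨G, hG, rfl⟩)

theorem exists_tvDist_lt_sub_add_sub_add (z₁ z₂ : Measure S) {ε : ℝ} (hε : 0 < ε) :
    ∃ F G : Set S, MeasurableSet F ∧ MeasurableSet G ∧
      tvDist z₁ z₂ < (z₁ F).toReal - (z₂ F).toReal + ((z₂ G).toReal - (z₁ G).toReal) + ε := by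
  have approx : ∀ w₁ w₂ : Measure S, ∃ F : Set S, MeasurableSet F ∧
      sSup {d : ℝ | ∃ F : Set S, MeasurableSet F ∧ d = (w₁ F).toReal - (w₂ F).toReal} - ε / 2 <
        (w₁ F).toReal - (w₂ F).toReal := by
    intro w₁ w₂
    obtain ⟨_, ⟨F, hF, rfl⟩, hlt⟩ := exists_lt_of_lt_csSup
      (s := {d : ℝ | ∃ F : Set S, MeasurableSet F ∧ d = (w₁ F).toReal - (w₂ F).toReal})
      ⟨0, ∅, .empty, by simp⟩ (sub_lt_self _ (half_pos hε))
    exact ⟨F, hF, hlt⟩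
  obtain ⟨F, hF, hFlt⟩ := approx z₁ z₂
  obtain ⟨G, hG, hGlt⟩ := approx z₂ z₁
  exact ⟨F, G, hF, hG, by unfold tvDist; linarith⟩

end TotalVariation

section Barycenter

variable {S α : Type*} [MeasurableSpace S] [MeasurableSpace α]

theorem integral_toReal_apply_eq_bary_map {π : Measure α} {f : α → Measure S}
    (hf : Measurable f) (h : ∀ᵐ z ∂π.map f, IsFiniteMeasure z) {F : Set S}
    (hF : MeasurableSet F) :
    ∫ a, (f a F).toReal ∂π = (bary (π.map f) F).toReal := by
  rw [← integral_map hf.aemeasurable (Measure.measurable_coe hF).ennreal_toReal.aestronglyMeasurable,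
    integral_toReal (Measure.measurable_coe hF).aemeasurable
      (h.mono fun z _ => measure_lt_top z F),
    bary, Measure.bind_apply hF measurable_id.aemeasurable]
  rfl

theorem integrable_toReal_apply {π : Measure α} [IsFiniteMeasure π] {f : α → Measure S}
    (hf : Measurable f) (h : ∀ᵐ z ∂π.map f, IsProbabilityMeasure z) {F : Set S}
    (hF : MeasurableSet F) :
    Integrable (fun a => (f a F).toReal) π := by
  refine Integrable.mono' (integrable_const (1 : ℝ))
    ((Measure.measurable_coe hF).comp hf).ennreal_toReal.aestronglyMeasurable ?_
  filter_upwards [ae_of_ae_map hf.aemeasurable h] with a _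
  rw [Real.norm_of_nonneg ENNReal.toReal_nonneg]
  exact measureReal_le_one

theorem ofReal_tvDist_bary_le_lintegral_tvDist {π : Measure (Measure S × Measure S)}
    [IsFiniteMeasure π] (h₁ : ∀ᵐ z ∂π.map Prod.fst, IsProbabilityMeasure z)
    (h₂ : ∀ᵐ z ∂π.map Prod.snd, IsProbabilityMeasure z) :
    ENNReal.ofReal (tvDist (bary (π.map Prod.fst)) (bary (π.map Prod.snd))) ≤
      ∫⁻ p, ENNReal.ofReal (tvDist p.1 p.2) ∂π := by
  refine ENNReal.le_of_forall_pos_le_add fun ε hε _ => ?_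
  obtain ⟨F, G, hF, hG, hlt⟩ :=
    exists_tvDist_lt_sub_add_sub_add (bary (π.map Prod.fst)) (bary (π.map Prod.snd))
      (NNReal.coe_pos.mpr hε)
  have fin₁ := h₁.mono fun z (_ : IsProbabilityMeasure z) => (inferInstance : IsFiniteMeasure z)
  have fin₂ := h₂.mono fun z (_ : IsProbabilityMeasure z) => (inferInstance : IsFiniteMeasure z)
  have i₁ := fun {F} => integrable_toReal_apply (F := F) measurable_fst h₁
  have i₂ := fun {F} => integrable_toReal_apply (F := F) measurable_snd h₂
  set g := fun p : Measure S × Measure S =>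
    (p.1 F).toReal - (p.2 F).toReal + ((p.2 G).toReal - (p.1 G).toReal)
  have iF : Integrable (fun p => (p.1 F).toReal - (p.2 F).toReal) π := (i₁ hF).sub (i₂ hF)
  have iG : Integrable (fun p => (p.2 G).toReal - (p.1 G).toReal) π := (i₂ hG).sub (i₁ hG)
  have integral_g : ∫ p, g p ∂π = (bary (π.map Prod.fst) F).toReal -
      (bary (π.map Prod.snd) F).toReal +
        ((bary (π.map Prod.snd) G).toReal - (bary (π.map Prod.fst) G).toReal) := by
    rw [integral_add iF iG,
      integral_sub (i₁ hF) (i₂ hF), integral_sub (i₂ hG) (i₁ hG),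
      integral_toReal_apply_eq_bary_map measurable_fst fin₁ hF,
      integral_toReal_apply_eq_bary_map measurable_snd fin₂ hF,
      integral_toReal_apply_eq_bary_map measurable_fst fin₁ hG,
      integral_toReal_apply_eq_bary_map measurable_snd fin₂ hG]
  have g_le : ∀ᵐ p ∂π, g p ≤ tvDist p.1 p.2 := by
    filter_upwards [ae_of_ae_map measurable_fst.aemeasurable h₁,
      ae_of_ae_map measurable_snd.aemeasurable h₂] with p _ _
    exact sub_add_sub_le_tvDist hF hG
  calc ENNReal.ofReal (tvDist (bary (π.map Prod.fst)) (bary (π.map Prod.snd)))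
      ≤ ENNReal.ofReal (∫ p, g p ∂π + ε) := ENNReal.ofReal_le_ofReal (by linarith)
    _ ≤ ENNReal.ofReal (∫ p, g p ∂π) + ε := by
        simpa using ENNReal.ofReal_add_le (p := ∫ p, g p ∂π) (q := ε)
    _ ≤ ∫⁻ p, ENNReal.ofReal (g p) ∂π + ε := by
        gcongr; exact ofReal_integral_le_lintegral_ofReal (iF.add iG)
    _ ≤ ∫⁻ p, ENNReal.ofReal (tvDist p.1 p.2) ∂π + ε := by
        gcongr ?_ + _
        exact lintegral_mono_ae (g_le.mono fun p hp => ENNReal.ofReal_le_ofReal hp)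

end Barycenter

theorem stmt_8_general {S : Type*} [MeasurableSpace S]
    (lam : Measure S)
    (r : ℝ)
    (μ ν : Measure (Measure S))
    (hμr : μ Set.univ = ENNReal.ofReal r)
    (hμ : ∀ᵐ z ∂μ, IsProbabilityMeasure z ∧ z ≪ lam)
    (hν : ∀ᵐ z ∂ν, IsProbabilityMeasure z ∧ z ≪ lam) :
    (∀ μt : Measure (Measure S × Measure S),
        μt.map Prod.fst = μ → μt.map Prod.snd = ν →
          ENNReal.ofReal (tvDist (bary μ) (bary ν)) ≤
            ∫⁻ p, ENNReal.ofReal (tvDist p.1 p.2) ∂μt) ∧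
      ENNReal.ofReal (tvDist (bary μ) (bary ν)) ≤
        ⨅ (μt : Measure (Measure S × Measure S))
          (_ : μt.map Prod.fst = μ ∧ μt.map Prod.snd = ν),
          ∫⁻ p, ENNReal.ofReal (tvDist p.1 p.2) ∂μt := by
  have coupling_bound : ∀ μt : Measure (Measure S × Measure S),
      μt.map Prod.fst = μ → μt.map Prod.snd = ν →
        ENNReal.ofReal (tvDist (bary μ) (bary ν)) ≤
          ∫⁻ p, ENNReal.ofReal (tvDist p.1 p.2) ∂μt := by
    rintro μt rfl rfl
    have : IsFiniteMeasure (μt.map Prod.fst) := ⟨hμr ▸ ENNReal.ofReal_lt_top⟩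
    have : IsFiniteMeasure μt := Measure.isFiniteMeasure_of_map measurable_fst.aemeasurable
    exact ofReal_tvDist_bary_le_lintegral_tvDist (hμ.mono fun _ h => h.1) (hν.mono fun _ h => h.1)
  exact ⟨coupling_bound, le_iInf₂ fun μt h => coupling_bound μt h.1 h.2⟩

/-- Every coupling `μ̃` of `μ` and `ν` satisfies
`∫ δ_TV(z₁,z₂) μ̃(dz₁,dz₂) ≥ δ_TV(b(μ), b(ν))`; in particular the Kantorovich distance
between `μ` and `ν` is at least `δ_TV(b(μ), b(ν))`. -/
theorem stmt_8 {S : Type*} [MetricSpace S] [CompleteSpace S]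
    [TopologicalSpace.SeparableSpace S] [MeasurableSpace S] [BorelSpace S]
    (lam : Measure S) [SigmaFinite lam]
    (r : ℝ) (hr : 0 < r)
    (μ ν : Measure (Measure S))
    (hμr : μ Set.univ = ENNReal.ofReal r) (hνr : ν Set.univ = ENNReal.ofReal r)
    (hμ : ∀ᵐ z ∂μ, IsProbabilityMeasure z ∧ z ≪ lam)
    (hν : ∀ᵐ z ∂ν, IsProbabilityMeasure z ∧ z ≪ lam) :
    (∀ μt : Measure (Measure S × Measure S),
        μt.map Prod.fst = μ → μt.map Prod.snd = ν →
          ENNReal.ofReal (tvDist (bary μ) (bary ν)) ≤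
            ∫⁻ p, ENNReal.ofReal (tvDist p.1 p.2) ∂μt) ∧
      ENNReal.ofReal (tvDist (bary μ) (bary ν)) ≤
        ⨅ (μt : Measure (Measure S × Measure S))
          (_ : μt.map Prod.fst = μ ∧ μt.map Prod.snd = ν),
          ∫⁻ p, ENNReal.ofReal (tvDist p.1 p.2) ∂μt :=
  stmt_8_general lam r μ ν hμr hμ hν
end

section
/- Let N ≥ 1 be an integer, let ξ₁, …, ξ_N be probability measures on (S, 𝓕) absolutely continuous with respect to λ, let β₁, …, β_N > 0, let a = Σ_{k=1}^N β_k ξ_k, and let b be a finite nonnegative measure on (S, 𝓕), absolutely continuous with respect to λ, with b(S) = a(S). Then there exist probability measures ζ₁, …, ζ_N on (S, 𝓕), absolutely continuous with respect to λ, such that b = Σ_{k=1}^N β_k ζ_k and Σ_{k=1}^N β_k δ_TV(ξ_k, ζ_k) = δ_TV(a, b). -/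
/-!
Let `h`, `g` be the densities of `a` and `b` with respect to `a + b`. Then `a` and `b` share the
part `min h g`, and their excesses `(h - g)⁺`, `(g - h)⁺` are mutually singular of the same mass
`ε`, so `δ_TV(a, b) = 2ε`. Cut each `ξ_k` with the fraction `φ = (h - g)⁺ / h`: the pieces
`π_k = φ ξ_k` add up (with weights `β_k`) to the excess of `a`. Replacing `π_k` by the same amount
of the excess of `b` turns `a` into `b`, and since `π_k` is singular to it,
`δ_TV(ξ_k, ζ_k) = 2 π_k(S)`; the weighted sum of these is `2ε`.
-/

open MeasureTheory
open scoped NNReal ENNReal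

open Set

section

variable {S : Type*} [MeasurableSpace S]

section TotalVariation

variable {α ρ σ : Measure S} [IsFiniteMeasure α] [IsFiniteMeasure ρ] [IsFiniteMeasure σ]

lemma sSup_add_sub_add_of_mutuallySingular (h : ρ ⟂ₘ σ) :
    sSup {d : ℝ | ∃ F : Set S, MeasurableSet F ∧ d = ((α + ρ) F).toReal - ((α + σ) F).toReal}
      = (ρ univ).toReal := by
  have cancel_α : ∀ F, ((α + ρ) F).toReal - ((α + σ) F).toReal = (ρ F).toReal - (σ F).toReal := by
    intro F
    simp only [Measure.add_apply, ENNReal.toReal_add (measure_ne_top _ _) (measure_ne_top _ _)]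
    ring
  obtain ⟨s, hs, hρs, hσs⟩ := h
  refine IsGreatest.csSup_eq ⟨⟨sᶜ, hs.compl, ?_⟩, ?_⟩
  · rw [cancel_α, hσs, measure_compl hs (measure_ne_top _ _), hρs]
    simp
  · rintro d ⟨F, -, rfl⟩
    rw [cancel_α]
    have := ENNReal.toReal_mono (measure_ne_top ρ univ) (measure_mono (subset_univ F))
    linarith [ENNReal.toReal_nonneg (a := σ F)]

lemma tvDist_add_add_of_mutuallySingular (h : ρ ⟂ₘ σ) :
    tvDist (α + ρ) (α + σ) = (ρ univ).toReal + (σ univ).toReal := by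
  rw [tvDist, sSup_add_sub_add_of_mutuallySingular h,
    sSup_add_sub_add_of_mutuallySingular h.symm]

end TotalVariation

lemma withDensity_one_sub_add_withDensity (μ : Measure S) {φ : S → ℝ≥0∞} (hφ : Measurable φ)
    (hφ1 : φ ≤ 1) : μ.withDensity (1 - φ) + μ.withDensity φ = μ := by
  rw [← withDensity_add_left (measurable_one.sub hφ), tsub_add_cancel_of_le hφ1,
    withDensity_one]

lemma isFiniteMeasure_withDensity_of_le_one (μ : Measure S) [IsFiniteMeasure μ]
    {φ : S → ℝ≥0∞} (hφ1 : φ ≤ 1) : IsFiniteMeasure (μ.withDensity φ) :=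
  isFiniteMeasure_of_le μ (by simpa using withDensity_mono (μ := μ) (ae_of_all _ hφ1))

lemma withDensity_finset_sum_smul {ι : Type*} [Fintype ι] (c : ι → ℝ≥0∞) (ξ : ι → Measure S)
    (φ : S → ℝ≥0∞) : (∑ k, c k • ξ k).withDensity φ = ∑ k, c k • (ξ k).withDensity φ := by
  simp only [← Measure.sum_fintype, withDensity_sum, withDensity_smul_measure]

lemma mul_one_sub_tsub_div_self {h g : ℝ≥0∞} (hh : h ≠ ∞) :
    h * (1 - (h - g) / h) = min h g := by
  rcases eq_or_ne h 0 with rfl | hh0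
  · simp
  rw [ENNReal.mul_sub (fun _ _ => hh), mul_one, ENNReal.mul_div_cancel hh0 hh,
    ← tsub_min (a := h) (b := g), ENNReal.sub_sub_cancel hh (min_le_left _ _)]

lemma exists_withDensity_split (a b : Measure S) [IsFiniteMeasure a] [IsFiniteMeasure b] :
    ∃ (φ : S → ℝ≥0∞) (Q : Measure S), Measurable φ ∧ φ ≤ 1 ∧
      b = a.withDensity (1 - φ) + Q ∧ ∀ ξ : Measure S, ξ.withDensity φ ⟂ₘ Q := by
  set ν := a + b
  set h := a.rnDeriv ν
  set g := b.rnDeriv ν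
  have hh : Measurable h := Measure.measurable_rnDeriv _ _
  have hg : Measurable g := Measure.measurable_rnDeriv _ _
  refine ⟨(h - g) / h, ν.withDensity (g - h), (hh.sub hg).div hh,
    fun x => ENNReal.div_le_of_le_mul (by simp), ?_, fun ξ => ?_⟩
  · have ha : ν.withDensity h = a :=
      Measure.withDensity_rnDeriv_eq _ _ (Measure.AbsolutelyContinuous.rfl.add_right b)
    have hb : ν.withDensity g = b :=
      Measure.withDensity_rnDeriv_eq _ _ (Measure.AbsolutelyContinuous.rfl.add_right' a)
    have hmin :
        ν.withDensity (h * (1 - (h - g) / h)) = ν.withDensity (fun x => min (h x) (g x)) := by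
      refine withDensity_congr_ae ?_
      filter_upwards [Measure.rnDeriv_lt_top a ν] with x hx
      exact mul_one_sub_tsub_div_self hx.ne
    rw [← ha, ← withDensity_mul _ hh (measurable_one.sub ((hh.sub hg).div hh)), hmin,
      ← withDensity_add_left (hh.min hg)]
    conv_lhs => rw [← hb]
    congr 1
    funext x
    rw [Pi.add_apply, Pi.sub_apply, add_comm, min_comm, tsub_add_min]
  · refine ⟨{x | h x ≤ g x}, measurableSet_le hh hg, ?_, ?_⟩
    · rw [withDensity_apply_eq_zero ((hh.sub hg).div hh)]
      convert measure_empty (μ := ξ)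
      ext x
      simp +contextual [tsub_eq_zero_iff_le]
    · rw [withDensity_apply_eq_zero (hg.sub hh)]
      convert measure_empty (μ := ν)
      ext x
      simp +contextual [tsub_eq_zero_iff_le, le_of_lt]

lemma div_mul_cancel_of_mul_le {β x ε : ℝ≥0∞} (hβ : β ≠ 0) (hε : ε ≠ ∞) (h : β * x ≤ ε) :
    x / ε * ε = x := by
  rcases eq_or_ne ε 0 with rfl | hε0
  · have : x = 0 := by simpa [hβ] using h
    simp [this]
  · exact ENNReal.div_mul_cancel hε0 hε

lemma sum_smul_div_measure_univ_smul {ι : Type*} [Fintype ι] (β x : ι → ℝ≥0∞)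
    (Q : Measure S) [IsFiniteMeasure Q] (h : ∑ k, β k * x k = Q univ) :
    ∑ k, β k • (x k / Q univ) • Q = Q := by
  simp only [smul_smul, ← Finset.sum_smul, div_eq_mul_inv, ← mul_assoc, ← Finset.sum_mul, h]
  rcases eq_or_ne (Q univ) 0 with hQ | hQ
  · simp [Measure.measure_univ_eq_zero.mp hQ]
  · rw [ENNReal.mul_inv_cancel hQ (measure_ne_top _ _), one_smul]

theorem exists_rebalance_of_mutuallySingular {ι : Type*} [Fintype ι] (β : ι → ℝ≥0)
    (hβ : ∀ k, 0 < β k) (μ π : ι → Measure S) [∀ k, IsFiniteMeasure (μ k)]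
    [∀ k, IsFiniteMeasure (π k)]
    (Q : Measure S) [IsFiniteMeasure Q] (hsing : ∀ k, π k ⟂ₘ Q)
    (hmass : ∑ k, (β k : ℝ≥0∞) * π k univ = Q univ) :
    ∃ ζ : ι → Measure S, (∀ k, ζ k univ = (μ k + π k) univ ∧ ζ k ≪ μ k + Q) ∧
      ∑ k, (β k : ℝ≥0∞) • ζ k = ∑ k, (β k : ℝ≥0∞) • μ k + Q ∧
      ∑ k, (β k : ℝ) * tvDist (μ k + π k) (ζ k) = 2 * (Q univ).toReal := by
  set c : ι → ℝ≥0∞ := fun k => π k univ / Q univ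
  have hc : ∀ k, c k * Q univ = π k univ := fun k =>
    div_mul_cancel_of_mul_le (by exact_mod_cast (hβ k).ne') (measure_ne_top _ _)
      (hmass ▸ Finset.single_le_sum (fun i _ => zero_le) (Finset.mem_univ k))
  have : ∀ k, IsFiniteMeasure (c k • Q) := fun k => ⟨by simp [hc k]⟩
  have htv : ∀ k, tvDist (μ k + π k) (μ k + c k • Q) = 2 * (π k univ).toReal := fun k => by
    rw [tvDist_add_add_of_mutuallySingular ((hsing k).symm.smul (c k)).symm]
    simp [hc k, two_mul]
  refine ⟨fun k => μ k + c k • Q, fun k => ⟨by simp [hc k], ?_⟩, ?_, ?_⟩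
  · exact (Measure.AbsolutelyContinuous.rfl.add_right Q).add_left
      ((Measure.AbsolutelyContinuous.rfl.smul_left (c k)).add_right' (μ k))
  · simp only [smul_add, Finset.sum_add_distrib, sum_smul_div_measure_univ_smul _ _ Q hmass, c]
  · simp only [htv, ← hmass]
    rw [ENNReal.toReal_sum (fun k _ => by finiteness), Finset.mul_sum]
    refine Finset.sum_congr rfl fun k _ => ?_
    rw [ENNReal.toReal_mul, ENNReal.coe_toReal]
    ring

theorem exists_sum_smul_eq_of_measure_univ_eq {ι : Type*} [Fintype ι] (ξ : ι → Measure S)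
    [∀ k, IsProbabilityMeasure (ξ k)] (β : ι → ℝ≥0) (hβ : ∀ k, 0 < β k) (b : Measure S)
    [IsFiniteMeasure b] (hmass : b univ = (∑ k, (β k : ℝ≥0∞) • ξ k) univ) :
    ∃ ζ : ι → Measure S, (∀ k, IsProbabilityMeasure (ζ k) ∧ ζ k ≪ ξ k + b) ∧
      b = ∑ k, (β k : ℝ≥0∞) • ζ k ∧
      ∑ k, (β k : ℝ) * tvDist (ξ k) (ζ k) = tvDist (∑ k, (β k : ℝ≥0∞) • ξ k) b := by
  set a := ∑ k, (β k : ℝ≥0∞) • ξ k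
  have : IsFiniteMeasure a := ⟨by simp [a, Measure.finsetSum_apply, ENNReal.sum_lt_top]⟩
  obtain ⟨φ, Q, hφ, hφ1, hb, hsing⟩ := exists_withDensity_split a b
  have hξ : ∀ k, (ξ k).withDensity (1 - φ) + (ξ k).withDensity φ = ξ k := fun k =>
    withDensity_one_sub_add_withDensity _ hφ hφ1
  have ha : a.withDensity (1 - φ) + a.withDensity φ = a :=
    withDensity_one_sub_add_withDensity _ hφ hφ1
  have hQb : Q ≤ b := hb ▸ Measure.le_add_left le_rfl
  have : IsFiniteMeasure Q := isFiniteMeasure_of_le b hQb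
  have := fun k => isFiniteMeasure_withDensity_of_le_one (ξ k) hφ1
  have := fun k => isFiniteMeasure_withDensity_of_le_one (ξ k) (tsub_le_self : 1 - φ ≤ 1)
  have := isFiniteMeasure_withDensity_of_le_one a hφ1
  have := isFiniteMeasure_withDensity_of_le_one a (tsub_le_self : 1 - φ ≤ 1)
  have hPQ : a.withDensity φ univ = Q univ := by
    rw [← ha, hb, Measure.add_apply, Measure.add_apply] at hmass
    exact ((ENNReal.add_right_inj (measure_ne_top _ _)).mp hmass).symm
  have hsum : ∑ k, (β k : ℝ≥0∞) * (ξ k).withDensity φ univ = Q univ := by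
    rw [← hPQ, withDensity_finset_sum_smul, Measure.finsetSum_apply]
    simp only [Measure.smul_apply, smul_eq_mul]
  obtain ⟨ζ, hζ, hζsum, hζtv⟩ := exists_rebalance_of_mutuallySingular β hβ
    (fun k => (ξ k).withDensity (1 - φ)) (fun k => (ξ k).withDensity φ) Q (fun k => hsing _) hsum
  refine ⟨ζ, fun k => ⟨⟨by rw [(hζ k).1, hξ k, measure_univ]⟩, (hζ k).2.trans ?_⟩, ?_, ?_⟩
  · exact ((withDensity_absolutelyContinuous _ _).add_right b).add_left
      (hQb.absolutelyContinuous.add_right' (ξ k))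
  · rw [hζsum, ← withDensity_finset_sum_smul, hb]
  · simp only [hξ] at hζtv
    rw [hζtv, ← ha, hb, tvDist_add_add_of_mutuallySingular (hsing a), hPQ]
    ring

end

theorem stmt_9_general {S : Type*} [MeasurableSpace S]
    (lam : Measure S)
    (N : ℕ)
    (ξ : Fin N → Measure S) (hξ : ∀ k, IsProbabilityMeasure (ξ k) ∧ ξ k ≪ lam)
    (β : Fin N → ℝ≥0) (hβ : ∀ k, 0 < β k)
    (b : Measure S) [IsFiniteMeasure b] (hbl : b ≪ lam)
    (hmass : b Set.univ = (∑ k, (β k : ℝ≥0∞) • ξ k) Set.univ) :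
    ∃ ζ : Fin N → Measure S,
      (∀ k, IsProbabilityMeasure (ζ k) ∧ ζ k ≪ lam) ∧
        b = ∑ k, (β k : ℝ≥0∞) • ζ k ∧
        ∑ k, (β k : ℝ) * tvDist (ξ k) (ζ k) = tvDist (∑ k, (β k : ℝ≥0∞) • ξ k) b := by
  have := fun k => (hξ k).1
  obtain ⟨ζ, hζ, hb, htv⟩ := exists_sum_smul_eq_of_measure_univ_eq ξ β hβ b hmass
  exact ⟨ζ, fun k => ⟨(hζ k).1, (hζ k).2.trans ((hξ k).2.add_left hbl)⟩, hb, htv⟩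

/-- Given probability measures `ξ₁, …, ξ_N ≪ λ`, weights `β_k > 0`,
`a = Σ β_k ξ_k`, and a finite nonnegative measure `b ≪ λ` with `b(S) = a(S)`, there are
probability measures `ζ₁, …, ζ_N ≪ λ` with `b = Σ β_k ζ_k` and
`Σ β_k δ_TV(ξ_k, ζ_k) = δ_TV(a, b)`. -/
theorem stmt_9 {S : Type*} [MetricSpace S] [CompleteSpace S]
    [TopologicalSpace.SeparableSpace S] [MeasurableSpace S] [BorelSpace S]
    (lam : Measure S) [SigmaFinite lam]
    (N : ℕ) (hN : 1 ≤ N)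
    (ξ : Fin N → Measure S) (hξ : ∀ k, IsProbabilityMeasure (ξ k) ∧ ξ k ≪ lam)
    (β : Fin N → ℝ≥0) (hβ : ∀ k, 0 < β k)
    (b : Measure S) [IsFiniteMeasure b] (hbl : b ≪ lam)
    (hmass : b Set.univ = (∑ k, (β k : ℝ≥0∞) • ξ k) Set.univ) :
    ∃ ζ : Fin N → Measure S,
      (∀ k, IsProbabilityMeasure (ζ k) ∧ ζ k ≪ lam) ∧
        b = ∑ k, (β k : ℝ≥0∞) • ζ k ∧
        ∑ k, (β k : ℝ) * tvDist (ξ k) (ζ k) = tvDist (∑ k, (β k : ℝ≥0∞) • ξ k) b :=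
  stmt_9_general lam N ξ hξ β hβ b hbl hmass
end

section
/- Let r > 0, let x and y be probability measures on (S, 𝓕) absolutely continuous with respect to λ, and let μ be a measure of total mass r on the space of measures on (S, 𝓕) such that μ-almost every point is a probability measure absolutely continuous with respect to λ and b(μ) = r·x. Then the infimum of d_K(μ, ν), taken over all measures ν of total mass r on the space of measures on (S, 𝓕) such that ν-almost every point is a probability measure absolutely continuous with respect to λ and b(ν) = r·y, equals r·δ_TV(x, y). -/
/-!
The Hahn decomposition gives `x + β = y + α` with `α ⟂ₘ β`, `α ≤ x`, `β ≤ y`, so that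
`δ_TV(x, y) = α(S) + β(S)` and `α = φ·x` with `0 ≤ φ ≤ 1`.

Lower bound: if `A` is the Hahn set, `δ_TV(z₁, z₂) ≥ (z₁ - z₂)(A) + (z₂ - z₁)(Aᶜ)`; integrating
this against any coupling of `μ` and `ν` and using the barycenters gives `r·δ_TV(x, y)`.

Upper bound: the map `T z = (1 - φ)·z + (∫ φ dz)·β/β(S)` moves the mass `∫ φ dz`, so
`δ_TV(z, T z) ≤ 2 ∫ φ dz`. It is linear in `z`, hence `b(T₊μ) = T(r·x) = r·y`, and the coupling
`(z, T z)` costs `2 r α(S) = r·δ_TV(x, y)`. Since `S` is countably generated, the set of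
probability measures `≪ λ` is measurable, which lets `T₊μ` inherit the constraints from `μ`.
-/

open MeasureTheory
open scoped NNReal ENNReal

/-- The Kantorovich distance between two measures on the space of measures on `S`:
the infimum over all couplings `μ̃` of `∫ δ_TV(z₁,z₂) μ̃(dz₁,dz₂)`. -/
noncomputable def dK {S : Type*} [MeasurableSpace S] (μ ν : Measure (Measure S)) : ℝ≥0∞ :=
  ⨅ (μt : Measure (Measure S × Measure S))
    (_ : μt.map Prod.fst = μ ∧ μt.map Prod.snd = ν),
    ∫⁻ p, ENNReal.ofReal (tvDist p.1 p.2) ∂μt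

section TotalVariation

variable {S : Type*} [MeasurableSpace S] {z₁ z₂ x y α β : Measure S}

noncomputable def supDiff (z₁ z₂ : Measure S) : ℝ :=
  sSup {d : ℝ | ∃ F : Set S, MeasurableSet F ∧ d = (z₁ F).toReal - (z₂ F).toReal}

lemma tvDist_eq_supDiff_add_supDiff (z₁ z₂ : Measure S) :
    tvDist z₁ z₂ = supDiff z₁ z₂ + supDiff z₂ z₁ :=
  rfl

lemma supDiff_le_toReal [IsFiniteMeasure z₂] {a : ℝ≥0∞} (ha : a ≠ ∞)
    (h : ∀ F, MeasurableSet F → z₁ F ≤ z₂ F + a) : supDiff z₁ z₂ ≤ a.toReal := by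
  refine csSup_le ⟨_, ∅, .empty, rfl⟩ ?_
  rintro _ ⟨F, hF, rfl⟩
  have := ENNReal.toReal_mono (ENNReal.add_ne_top.2 ⟨measure_ne_top z₂ F, ha⟩) (h F hF)
  rw [ENNReal.toReal_add (measure_ne_top z₂ F) ha] at this
  linarith

lemma le_supDiff [IsFiniteMeasure z₁] {F : Set S} (hF : MeasurableSet F) :
    (z₁ F).toReal - (z₂ F).toReal ≤ supDiff z₁ z₂ := by
  refine le_csSup ⟨(z₁ Set.univ).toReal, ?_⟩ ⟨F, hF, rfl⟩
  rintro _ ⟨G, -, rfl⟩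
  have := measureReal_mono (μ := z₁) (Set.subset_univ G)
  simp only [measureReal_def] at this
  linarith [ENNReal.toReal_nonneg (a := z₂ G)]

lemma supDiff_nonneg [IsFiniteMeasure z₁] : 0 ≤ supDiff z₁ z₂ := by
  simpa using le_supDiff (z₂ := z₂) MeasurableSet.empty

lemma sub_le_ofReal_supDiff [IsFiniteMeasure z₁] {F : Set S} (hF : MeasurableSet F) :
    z₁ F - z₂ F ≤ ENNReal.ofReal (supDiff z₁ z₂) := by
  refine le_trans ?_ (ENNReal.ofReal_le_ofReal (le_supDiff hF))
  rcases le_total (z₁ F) (z₂ F) with h | h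
  · simp [tsub_eq_zero_of_le h]
  · rw [← ENNReal.toReal_sub_of_le h (measure_ne_top z₁ F),
      ENNReal.ofReal_toReal (ENNReal.sub_ne_top (measure_ne_top z₁ F))]

lemma sub_add_sub_le_ofReal_tvDist [IsFiniteMeasure z₁] [IsFiniteMeasure z₂] {A B : Set S}
    (hA : MeasurableSet A) (hB : MeasurableSet B) :
    z₁ A - z₂ A + (z₂ B - z₁ B) ≤ ENNReal.ofReal (tvDist z₁ z₂) := by
  rw [tvDist_eq_supDiff_add_supDiff, ENNReal.ofReal_add supDiff_nonneg supDiff_nonneg]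
  exact add_le_add (sub_le_ofReal_supDiff hA) (sub_le_ofReal_supDiff hB)

lemma ofReal_tvDist_le [IsFiniteMeasure z₁] [IsFiniteMeasure z₂] {a b : ℝ≥0∞} (ha : a ≠ ∞)
    (hb : b ≠ ∞) (h₁ : ∀ F, MeasurableSet F → z₁ F ≤ z₂ F + a)
    (h₂ : ∀ F, MeasurableSet F → z₂ F ≤ z₁ F + b) :
    ENNReal.ofReal (tvDist z₁ z₂) ≤ a + b := by
  calc ENNReal.ofReal (tvDist z₁ z₂) ≤ ENNReal.ofReal (a.toReal + b.toReal) :=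
        ENNReal.ofReal_le_ofReal (add_le_add (supDiff_le_toReal ha h₁) (supDiff_le_toReal hb h₂))
    _ = a + b := by
        rw [← ENNReal.toReal_add ha hb, ENNReal.ofReal_toReal (ENNReal.add_ne_top.2 ⟨ha, hb⟩)]

lemma exists_mutuallySingular_add_eq_add (x y : Measure S) [IsFiniteMeasure x]
    [IsFiniteMeasure y] : ∃ α β : Measure S, α ≤ x ∧ β ≤ y ∧ α ⟂ₘ β ∧ x + β = y + α := by
  obtain ⟨s, hs, hyx, hxy⟩ := hahn_decomposition x y
  have hyx' : y.restrict s ≤ x.restrict s := Measure.le_iff.2 fun t ht => by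
    simp only [Measure.restrict_apply ht]
    exact hyx _ (ht.inter hs) Set.inter_subset_right
  have hxy' : x.restrict sᶜ ≤ y.restrict sᶜ := Measure.le_iff.2 fun t ht => by
    simp only [Measure.restrict_apply ht]
    exact hxy _ (ht.inter hs.compl) Set.inter_subset_right
  refine ⟨x.restrict s - y.restrict s, y.restrict sᶜ - x.restrict sᶜ,
    Measure.sub_le.trans Measure.restrict_le_self, Measure.sub_le.trans Measure.restrict_le_self,
    ⟨sᶜ, hs.compl, ?_, ?_⟩, ?_⟩
  · exact Measure.absolutelyContinuous_of_le Measure.sub_le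
      (by simp [Measure.restrict_apply hs.compl])
  · exact Measure.absolutelyContinuous_of_le Measure.sub_le (by simp [Measure.restrict_apply hs])
  · calc x + (y.restrict sᶜ - x.restrict sᶜ)
        = x.restrict s + x.restrict sᶜ + (y.restrict sᶜ - x.restrict sᶜ) := by
          rw [Measure.restrict_add_restrict_compl hs]
      _ = x.restrict s + (y.restrict sᶜ - x.restrict sᶜ + x.restrict sᶜ) := by ac_rfl
      _ = (x.restrict s - y.restrict s + y.restrict s) + y.restrict sᶜ := by
          rw [Measure.sub_add_cancel_of_le hxy', Measure.sub_add_cancel_of_le hyx']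
      _ = y.restrict s + y.restrict sᶜ + (x.restrict s - y.restrict s) := by ac_rfl
      _ = y + (x.restrict s - y.restrict s) := by rw [Measure.restrict_add_restrict_compl hs]

lemma sub_eq_measure_univ_of_add_eq_add [IsFiniteMeasure y] (h : x + β = y + α) {A : Set S}
    (hA : MeasurableSet A) (hαA : α Aᶜ = 0) (hβA : β A = 0) : x A - y A = α Set.univ := by
  have hxA : x A = y A + α A := by simpa [hβA] using congrArg (· A) h
  rw [hxA, ENNReal.add_sub_cancel_left (measure_ne_top y A), ← measure_add_measure_compl hA, hαA,
    add_zero]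

lemma le_add_measure_univ_of_add_eq_add (h : x + β = y + α) (F : Set S) :
    x F ≤ y F + α Set.univ :=
  calc x F ≤ x F + β F := le_self_add
    _ = y F + α F := by rw [← Measure.add_apply, h, Measure.add_apply]
    _ ≤ y F + α Set.univ := by gcongr; exact Set.subset_univ F

lemma sub_add_sub_eq_of_add_eq_add [IsFiniteMeasure x] [IsFiniteMeasure y] (h : x + β = y + α)
    {s : Set S} (hs : MeasurableSet s) (hαs : α s = 0) (hβs : β sᶜ = 0) :
    x sᶜ - y sᶜ + (y s - x s) = α Set.univ + β Set.univ := by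
  rw [sub_eq_measure_univ_of_add_eq_add h hs.compl (by rwa [compl_compl]) hβs,
    sub_eq_measure_univ_of_add_eq_add h.symm hs hβs hαs]

lemma ofReal_tvDist_eq_of_add_eq_add [IsFiniteMeasure x] [IsFiniteMeasure y] [IsFiniteMeasure α]
    [IsFiniteMeasure β] (hαβ : α ⟂ₘ β) (h : x + β = y + α) :
    ENNReal.ofReal (tvDist x y) = α Set.univ + β Set.univ := by
  obtain ⟨s, hs, hαs, hβs⟩ := hαβ
  refine le_antisymm (ofReal_tvDist_le (measure_ne_top α _) (measure_ne_top β _)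
    (fun F _ => le_add_measure_univ_of_add_eq_add h F)
    (fun F _ => le_add_measure_univ_of_add_eq_add h.symm F)) ?_
  rw [← sub_add_sub_eq_of_add_eq_add h hs hαs hβs]
  exact sub_add_sub_le_ofReal_tvDist hs.compl hs

lemma exists_ofReal_tvDist_eq_sub_add_sub (x y : Measure S) [IsFiniteMeasure x]
    [IsFiniteMeasure y] : ∃ A, MeasurableSet A ∧
      ENNReal.ofReal (tvDist x y) = x A - y A + (y Aᶜ - x Aᶜ) := by
  obtain ⟨α, β, hαx, hβy, ⟨s, hs, hαs, hβs⟩, h⟩ := exists_mutuallySingular_add_eq_add x y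
  have := isFiniteMeasure_of_le x hαx
  have := isFiniteMeasure_of_le y hβy
  refine ⟨sᶜ, hs.compl, ?_⟩
  rw [compl_compl, sub_add_sub_eq_of_add_eq_add h hs hαs hβs,
    ofReal_tvDist_eq_of_add_eq_add ⟨s, hs, hαs, hβs⟩ h]

end TotalVariation

section Kantorovich

variable {S : Type*} [MeasurableSpace S]

lemma lintegral_bary (μ : Measure (Measure S)) {f : S → ℝ≥0∞} (hf : Measurable f) :
    ∫⁻ s, f s ∂bary μ = ∫⁻ z, ∫⁻ s, f s ∂z ∂μ :=
  Measure.lintegral_bind measurable_id.aemeasurable hf.aemeasurable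

lemma bary_map_apply {X : Type*} [MeasurableSpace X] (π : Measure X) {f : X → Measure S}
    (hf : Measurable f) {F : Set S} (hF : MeasurableSet F) :
    bary (π.map f) F = ∫⁻ a, f a F ∂π := by
  rw [bary, Measure.bind_apply hF measurable_id.aemeasurable]
  exact lintegral_map (Measure.measurable_coe hF) hf

lemma dK_map_le (μ : Measure (Measure S)) {T : Measure S → Measure S} (hT : Measurable T) :
    dK μ (μ.map T) ≤ ∫⁻ z, ENNReal.ofReal (tvDist z (T z)) ∂μ := by
  have hpair : Measurable fun z => (z, T z) := measurable_id.prodMk hT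
  refine (iInf₂_le (μ.map fun z => (z, T z)) ⟨?_, ?_⟩).trans (lintegral_map_le _ _)
  · rw [Measure.map_map measurable_fst hpair]
    exact Measure.map_id
  · rw [Measure.map_map measurable_snd hpair]
    rfl

lemma mul_ofReal_tvDist_le_dK {μ ν : Measure (Measure S)} {x y : Measure S} [IsFiniteMeasure x]
    [IsFiniteMeasure y] {c : ℝ≥0∞} (hc : c ≠ ∞) (hμ : ∀ᵐ z ∂μ, IsFiniteMeasure z)
    (hν : ∀ᵐ z ∂ν, IsFiniteMeasure z) (hμb : bary μ = c • x) (hνb : bary ν = c • y) :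
    c * ENNReal.ofReal (tvDist x y) ≤ dK μ ν := by
  obtain ⟨A, hA, htv⟩ := exists_ofReal_tvDist_eq_sub_add_sub x y
  refine le_iInf₂ fun π ⟨h₁, h₂⟩ => ?_
  have hπ {f : Measure S × Measure S → Measure S} (hf : Measurable f) {ξ : Measure (Measure S)}
      {w : Measure S} (hξ : π.map f = ξ) (hw : bary ξ = c • w) {F : Set S}
      (hF : MeasurableSet F) : ∫⁻ p, f p F ∂π = c * w F := by
    rw [← bary_map_apply π hf hF, hξ, hw, Measure.smul_apply, smul_eq_mul]
  have hfin : ∀ᵐ p ∂π, IsFiniteMeasure p.1 ∧ IsFiniteMeasure p.2 :=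
    (ae_of_ae_map measurable_fst.aemeasurable (h₁ ▸ hμ)).and
      (ae_of_ae_map measurable_snd.aemeasurable (h₂ ▸ hν))
  have hmeas {F : Set S} (hF : MeasurableSet F) :
      Measurable (fun p : Measure S × Measure S => p.1 F) ∧
        Measurable (fun p : Measure S × Measure S => p.2 F) :=
    ⟨(Measure.measurable_coe hF).comp measurable_fst,
      (Measure.measurable_coe hF).comp measurable_snd⟩
  calc c * ENNReal.ofReal (tvDist x y) = (c * x A - c * y A) + (c * y Aᶜ - c * x Aᶜ) := by
        rw [htv, mul_add, ENNReal.mul_sub fun _ _ => hc, ENNReal.mul_sub fun _ _ => hc]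
    _ = (∫⁻ p, p.1 A ∂π - ∫⁻ p, p.2 A ∂π) + (∫⁻ p, p.2 Aᶜ ∂π - ∫⁻ p, p.1 Aᶜ ∂π) := by
        rw [hπ measurable_fst h₁ hμb hA, hπ measurable_snd h₂ hνb hA,
          hπ measurable_fst h₁ hμb hA.compl, hπ measurable_snd h₂ hνb hA.compl]
    _ ≤ ∫⁻ p, (p.1 A - p.2 A) ∂π + ∫⁻ p, (p.2 Aᶜ - p.1 Aᶜ) ∂π :=
        add_le_add (lintegral_sub_le _ _ (hmeas hA).2) (lintegral_sub_le _ _ (hmeas hA.compl).1)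
    _ = ∫⁻ p, (p.1 A - p.2 A + (p.2 Aᶜ - p.1 Aᶜ)) ∂π :=
        (lintegral_add_left ((hmeas hA).1.sub (hmeas hA).2) _).symm
    _ ≤ ∫⁻ p, ENNReal.ofReal (tvDist p.1 p.2) ∂π :=
        lintegral_mono_ae <| hfin.mono fun p ⟨_, _⟩ => sub_add_sub_le_ofReal_tvDist hA hA.compl

end Kantorovich

section Transport

variable {S : Type*} [MeasurableSpace S] {φ : S → ℝ≥0∞} {ρ : Measure S}

noncomputable def transport (φ : S → ℝ≥0∞) (ρ : Measure S) (z : Measure S) : Measure S :=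
  z.withDensity (fun s => 1 - φ s) + (∫⁻ s, φ s ∂z) • ρ

lemma transport_apply (z : Measure S) {F : Set S} (hF : MeasurableSet F) :
    transport φ ρ z F = ∫⁻ s in F, (1 - φ s) ∂z + (∫⁻ s, φ s ∂z) * ρ F := by
  rw [transport, Measure.add_apply, withDensity_apply _ hF, Measure.smul_apply, smul_eq_mul]

lemma measurable_transport (hφ : Measurable φ) : Measurable (transport φ ρ) := by
  refine Measure.measurable_of_measurable_coe _ fun F hF => ?_
  simp_rw [transport_apply _ hF, ← lintegral_indicator hF]
  exact (Measure.measurable_lintegral ((measurable_const.sub hφ).indicator hF)).add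
    ((Measure.measurable_lintegral hφ).mul_const _)

lemma setLIntegral_one_sub_add_setLIntegral (hφ : Measurable φ) (hφ₁ : φ ≤ 1) (z : Measure S)
    (F : Set S) : ∫⁻ s in F, (1 - φ s) ∂z + ∫⁻ s in F, φ s ∂z = z F := by
  have h1φ : Measurable fun s => 1 - φ s := measurable_const.sub hφ
  rw [← lintegral_add_left h1φ, ← setLIntegral_one F]
  exact lintegral_congr fun s => tsub_add_cancel_of_le (hφ₁ s)

lemma transport_absolutelyContinuous {z lam : Measure S} (hz : z ≪ lam) (hρ : ρ ≪ lam) :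
    transport φ ρ z ≪ lam :=
  ((withDensity_absolutelyContinuous z _).trans hz).add_left (hρ.smul_left _)

lemma transport_smul (c : ℝ≥0∞) (z : Measure S) :
    transport φ ρ (c • z) = c • transport φ ρ z := by
  simp only [transport, withDensity_smul_measure, lintegral_smul_measure, smul_add, smul_eq_mul,
    mul_smul]

lemma bary_map_transport (hφ : Measurable φ) (μ : Measure (Measure S)) :
    bary (μ.map (transport φ ρ)) = transport φ ρ (bary μ) := by
  ext F hF
  have hψ : Measurable (F.indicator fun s => 1 - φ s) := (measurable_const.sub hφ).indicator hF
  rw [bary_map_apply μ (measurable_transport hφ) hF, transport_apply _ hF,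
    ← lintegral_indicator hF, lintegral_bary μ hψ, lintegral_bary μ hφ,
    ← lintegral_mul_const _ (Measure.measurable_lintegral hφ),
    ← lintegral_add_left (Measure.measurable_lintegral hψ)]
  refine lintegral_congr fun z => ?_
  rw [transport_apply z hF, lintegral_indicator hF]

lemma transport_eq_of_add_eq_add (hφ : Measurable φ) (hφ₁ : φ ≤ 1) {x y : Measure S}
    [IsFiniteMeasure x] (h : x + (∫⁻ s, φ s ∂x) • ρ = y + x.withDensity φ) :
    transport φ ρ x = y := by
  ext F hF
  have hF' := congrArg (· F) h
  simp only [Measure.add_apply, Measure.smul_apply, smul_eq_mul, withDensity_apply _ hF] at hF'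
  have hsplit := setLIntegral_one_sub_add_setLIntegral hφ hφ₁ x F
  have hfin : ∫⁻ s in F, φ s ∂x ≠ ∞ :=
    ne_top_of_le_ne_top (measure_ne_top x F) (le_add_self.trans_eq hsplit)
  rw [← ENNReal.add_left_inj hfin, transport_apply x hF, ← hF', ← hsplit]
  ac_rfl

variable [IsProbabilityMeasure ρ]

lemma transport_apply_univ (hφ : Measurable φ) (hφ₁ : φ ≤ 1) (z : Measure S) :
    transport φ ρ z Set.univ = z Set.univ := by
  rw [transport_apply z .univ, measure_univ, mul_one,
    ← setLIntegral_one_sub_add_setLIntegral hφ hφ₁ z .univ, Measure.restrict_univ]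

lemma isProbabilityMeasure_transport (hφ : Measurable φ) (hφ₁ : φ ≤ 1) (z : Measure S)
    [IsProbabilityMeasure z] : IsProbabilityMeasure (transport φ ρ z) :=
  ⟨by rw [transport_apply_univ hφ hφ₁, measure_univ]⟩

lemma ofReal_tvDist_transport_le (hφ : Measurable φ) (hφ₁ : φ ≤ 1) (z : Measure S)
    [IsFiniteMeasure z] : ENNReal.ofReal (tvDist z (transport φ ρ z)) ≤ 2 * ∫⁻ s, φ s ∂z := by
  have : IsFiniteMeasure (transport φ ρ z) :=
    ⟨by rw [transport_apply_univ hφ hφ₁]; exact measure_lt_top z _⟩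
  have hsplit := setLIntegral_one_sub_add_setLIntegral hφ hφ₁ z
  have hfin : ∫⁻ s, φ s ∂z ≠ ∞ := ne_top_of_le_ne_top (measure_ne_top z Set.univ)
    (by rw [← hsplit .univ, Measure.restrict_univ]; exact le_add_self)
  rw [two_mul]
  refine ofReal_tvDist_le hfin hfin (fun F hF => ?_) (fun F hF => ?_)
  · rw [← hsplit F, transport_apply z hF]
    exact add_le_add le_self_add (setLIntegral_le_lintegral _ _)
  · rw [transport_apply z hF, ← hsplit F]
    exact add_le_add le_self_add (mul_le_of_le_one_right' prob_le_one)

end Transport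

section Construction

variable {S : Type*} [MeasurableSpace S]

lemma exists_withDensity_eq_of_le {α x : Measure S} [IsFiniteMeasure x] (h : α ≤ x) :
    ∃ φ : S → ℝ≥0∞, Measurable φ ∧ φ ≤ 1 ∧ x.withDensity φ = α := by
  have := isFiniteMeasure_of_le x h
  refine ⟨fun s => min (α.rnDeriv x s) 1, (Measure.measurable_rnDeriv α x).min measurable_const,
    fun s => min_le_right _ _, ?_⟩
  calc x.withDensity (fun s => min (α.rnDeriv x s) 1) = x.withDensity (α.rnDeriv x) :=
        withDensity_congr_ae <| (Measure.rnDeriv_le_one_of_le h).mono fun s hs => min_eq_left hs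
    _ = α := Measure.withDensity_rnDeriv_eq α x (Measure.absolutelyContinuous_of_le h)

lemma exists_isProbabilityMeasure_smul_eq {β y : Measure S} [IsProbabilityMeasure y]
    (h : β ≤ y) : ∃ ρ : Measure S, IsProbabilityMeasure ρ ∧ ρ ≪ y ∧ β Set.univ • ρ = β := by
  rcases eq_or_ne β 0 with rfl | hβ
  · exact ⟨y, inferInstance, .rfl, by simp⟩
  have := isFiniteMeasure_of_le y h
  have hβ' : β Set.univ ≠ 0 := Measure.measure_univ_ne_zero.2 hβ
  refine ⟨(β Set.univ)⁻¹ • β, ⟨?_⟩, (Measure.absolutelyContinuous_of_le h).smul_left _, ?_⟩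
  · rw [Measure.smul_apply, smul_eq_mul, ENNReal.inv_mul_cancel hβ' (measure_ne_top β _)]
  · rw [smul_smul, ENNReal.mul_inv_cancel hβ' (measure_ne_top β _), one_smul]

open ProbabilityTheory in
lemma measurableSet_isProbabilityMeasure_absolutelyContinuous
    [MeasurableSpace.CountablyGenerated S] (lam : Measure S) [SigmaFinite lam] :
    MeasurableSet {z : Measure S | IsProbabilityMeasure z ∧ z ≪ lam} := by
  obtain ⟨lam', _, hll', hl'l⟩ := exists_isFiniteMeasure_absolutelyContinuous lam
  -- a finite kernel that is the identity on probability measures, so that the measurability of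
  -- `{a | κ a ≪ η a}` for kernels applies
  let κ : Kernel (Measure S) S :=
    ⟨fun z => if z Set.univ ≤ 1 then z else 0, Measurable.ite
      (measurableSet_le (Measure.measurable_coe .univ) measurable_const) measurable_id
      measurable_const⟩
  have : IsFiniteKernel κ := ⟨⟨1, ENNReal.one_lt_top, fun z => by
    change (if z Set.univ ≤ 1 then z else 0) Set.univ ≤ 1
    split_ifs with h
    exacts [h, zero_le]⟩⟩
  have hset : {z : Measure S | IsProbabilityMeasure z ∧ z ≪ lam} =
      {z | z Set.univ = 1} ∩ {z | κ z ≪ Kernel.const _ lam' z} := by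
    ext z
    simp only [Set.mem_ofPred_eq, Set.mem_inter_iff, isProbabilityMeasure_iff, Kernel.const_apply]
    refine and_congr_right fun hz => ?_
    change z ≪ lam ↔ (if z Set.univ ≤ 1 then z else 0) ≪ lam'
    rw [if_pos hz.le]
    exact ⟨fun h => h.trans hll', fun h => h.trans hl'l⟩
  rw [hset]
  exact (Measure.measurable_coe .univ (measurableSet_singleton 1)).inter
    (Kernel.measurableSet_absolutelyContinuous _ _)

lemma exists_dK_le_mul_ofReal_tvDist [MeasurableSpace.CountablyGenerated S] {lam : Measure S}
    [SigmaFinite lam] {x y : Measure S} [IsProbabilityMeasure x] [IsProbabilityMeasure y]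
    (hyl : y ≪ lam) {μ : Measure (Measure S)} {c : ℝ≥0∞}
    (hμ : ∀ᵐ z ∂μ, IsProbabilityMeasure z ∧ z ≪ lam) (hμb : bary μ = c • x) :
    ∃ ν : Measure (Measure S), ν Set.univ = μ Set.univ ∧
      (∀ᵐ z ∂ν, IsProbabilityMeasure z ∧ z ≪ lam) ∧ bary ν = c • y ∧
      dK μ ν ≤ c * ENNReal.ofReal (tvDist x y) := by
  obtain ⟨α, β, hαx, hβy, hαβ, hxy⟩ := exists_mutuallySingular_add_eq_add x y
  have := isFiniteMeasure_of_le x hαx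
  have := isFiniteMeasure_of_le y hβy
  have hmass : α Set.univ = β Set.univ := by
    simpa using (congrArg (· Set.univ) hxy).symm
  have htv := ofReal_tvDist_eq_of_add_eq_add hαβ hxy
  obtain ⟨φ, hφ, hφ₁, rfl⟩ := exists_withDensity_eq_of_le hαx
  obtain ⟨ρ, _, hρy, hρβ⟩ := exists_isProbabilityMeasure_smul_eq hβy
  have hφx : ∫⁻ s, φ s ∂x = β Set.univ := by
    rw [← hmass, withDensity_apply _ .univ, Measure.restrict_univ]
  have hT := measurable_transport (ρ := ρ) hφ
  refine ⟨μ.map (transport φ ρ), by rw [Measure.map_apply hT .univ, Set.preimage_univ], ?_, ?_, ?_⟩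
  · rw [ae_map_iff hT.aemeasurable (measurableSet_isProbabilityMeasure_absolutelyContinuous lam)]
    filter_upwards [hμ] with z ⟨_, hzl⟩
    exact ⟨isProbabilityMeasure_transport hφ hφ₁ z,
      transport_absolutelyContinuous hzl (hρy.trans hyl)⟩
  · rw [bary_map_transport hφ, hμb, transport_smul,
      transport_eq_of_add_eq_add hφ hφ₁ (by rw [hφx, hρβ, hxy])]
  calc dK μ (μ.map (transport φ ρ))
      ≤ ∫⁻ z, ENNReal.ofReal (tvDist z (transport φ ρ z)) ∂μ := dK_map_le μ hT
    _ ≤ ∫⁻ z, 2 * ∫⁻ s, φ s ∂z ∂μ :=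
        lintegral_mono_ae <| hμ.mono fun z ⟨_, _⟩ => ofReal_tvDist_transport_le hφ hφ₁ z
    _ = c * ENNReal.ofReal (tvDist x y) := by
        rw [lintegral_const_mul _ (Measure.measurable_lintegral hφ), ← lintegral_bary μ hφ, hμb,
          lintegral_smul_measure, hφx, htv, ← hmass, smul_eq_mul]
        ring

end Construction

theorem stmt_10_general {S : Type*} [MetricSpace S]
    [TopologicalSpace.SeparableSpace S] [MeasurableSpace S] [BorelSpace S]
    (lam : Measure S) [SigmaFinite lam]
    (r : ℝ) (hr : 0 < r)
    (x y : Measure S)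
    (hx : IsProbabilityMeasure x)
    (hy : IsProbabilityMeasure y) (hyl : y ≪ lam)
    (μ : Measure (Measure S))
    (hμr : μ Set.univ = ENNReal.ofReal r)
    (hμae : ∀ᵐ z ∂μ, IsProbabilityMeasure z ∧ z ≪ lam)
    (hμb : bary μ = ENNReal.ofReal r • x) :
    (⨅ (ν : Measure (Measure S))
        (_ : ν Set.univ = ENNReal.ofReal r ∧
          (∀ᵐ z ∂ν, IsProbabilityMeasure z ∧ z ≪ lam) ∧
          bary ν = ENNReal.ofReal r • y),
        dK μ ν) = ENNReal.ofReal (r * tvDist x y) := by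
  rw [ENNReal.ofReal_mul hr.le]
  refine le_antisymm ?_ (le_iInf₂ fun ν ⟨_, hνae, hνb⟩ => ?_)
  · obtain ⟨ν, hνr, hνae, hνb, hdK⟩ := exists_dK_le_mul_ofReal_tvDist hyl hμae hμb
    exact (iInf₂_le ν ⟨hνr.trans hμr, hνae, hνb⟩).trans hdK
  · exact mul_ofReal_tvDist_le_dK ENNReal.ofReal_ne_top
      (hμae.mono fun _ ⟨_, _⟩ => inferInstance) (hνae.mono fun _ ⟨_, _⟩ => inferInstance) hμb hνb

/-- If `μ` has total mass `r`, is concentrated on probability measures `≪ λ`,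
and has barycenter `r·x`, then the infimum of `d_K(μ, ν)` over all `ν` of total mass `r`,
concentrated on probability measures `≪ λ` with barycenter `r·y`, equals `r·δ_TV(x, y)`. -/
theorem stmt_10 {S : Type*} [MetricSpace S] [CompleteSpace S]
    [TopologicalSpace.SeparableSpace S] [MeasurableSpace S] [BorelSpace S]
    (lam : Measure S) [SigmaFinite lam]
    (r : ℝ) (hr : 0 < r)
    (x y : Measure S)
    (hx : IsProbabilityMeasure x) (hxl : x ≪ lam)
    (hy : IsProbabilityMeasure y) (hyl : y ≪ lam)
    (μ : Measure (Measure S))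
    (hμr : μ Set.univ = ENNReal.ofReal r)
    (hμae : ∀ᵐ z ∂μ, IsProbabilityMeasure z ∧ z ≪ lam)
    (hμb : bary μ = ENNReal.ofReal r • x) :
    (⨅ (ν : Measure (Measure S))
        (_ : ν Set.univ = ENNReal.ofReal r ∧
          (∀ᵐ z ∂ν, IsProbabilityMeasure z ∧ z ≪ lam) ∧
          bary ν = ENNReal.ofReal r • y),
        dK μ ν) = ENNReal.ofReal (r * tvDist x y) :=
  stmt_10_general lam r hr x y hx hy hyl μ hμr hμae hμb
end

section
/- Let n ≥ 1 and let k₁, …, k_n be density kernels with rectangular supports F₁ × G₁, …, F_n × G_n, and suppose there are numbers κ_m ≥ 1 with k_m(s₁,t₁)k_m(s₂,t₂) ≤ κ_m² k_m(s₂,t₁)k_m(s₁,t₂) for all s₁, s₂ ∈ F_m, t₁, t₂ ∈ G_m, for each 1 ≤ m ≤ n. Define K_m(s, E) = ∫_E k_m(s,t) λ(dt), and recursively K^{n,n} = K_n and K^{m−1,n}(s, E) = ∫_S k_{m−1}(s,t) K^{m,n}(t, E) λ(dt) for m = n, n−1, …, 2, and set Kⁿ = K^{1,n}. Suppose Kⁿ(s,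 S) > 0 for all s ∈ F₁. Then for all s₁, s₂ ∈ F₁ and all E ∈ 𝓕, |Kⁿ(s₁, E)/Kⁿ(s₁, G_n) − Kⁿ(s₂, E)/Kⁿ(s₂, G_n)| ≤ ∏_{m=1}^n (κ_m − 1)/(κ_m + 1). -/
open MeasureTheory
open scoped NNReal ENNReal

/-- Composition of a finite list of density kernels against the base measure `lam`,
restricted to a set `E` in the last coordinate:
`compKer lam [k₁, …, k_n] s E = ∫ k₁(s,t₁) ⋯ ∫ k_n(t_{n-1}, t_n) 1_E(t_n) λ(dt_n) ⋯ λ(dt₁)`,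
so that `compKer lam [k₁, …, k_n] = Kⁿ = K^{1,n}` of the recursive definition. -/
noncomputable def compKer {S : Type*} [MeasurableSpace S] (lam : Measure S) :
    List (S → S → ℝ≥0) → S → Set S → ℝ≥0∞
  | [] => fun s E => E.indicator (fun _ => (1 : ℝ≥0∞)) s
  | kk :: ks => fun s E => ∫⁻ t, (kk s t : ℝ≥0∞) * compKer lam ks t E ∂lam

/-!
Write `Kⁿ(s, ·) = ∫ k₁(s, t) K^{2,n}(t, ·) λ(dt)`. With `g = K^{2,n}(·, S)` and
`f = K^{2,n}(·, E) / g`, the ratio `Kⁿ(s, E) / Kⁿ(s, S)` is the average of `f` against the weight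
`w_s = k₁(s, ·) g`, and for `s₁, s₂ ∈ F₁` the cross-ratio bound on `k₁` gives
`w_{s₁}(t) w_{s₂}(u) ≤ κ₁² w_{s₂}(t) w_{s₁}(u)`. By Hopf's inequality, two such averages of a
function with values in `[m, M]` differ by at most `(κ₁ - 1)/(κ₁ + 1) (M - m)`: the cross-ratio
bound applied to `∫ w_{s₁} (f - m) · ∫ w_{s₂} (M - f)` gives a quadratic inequality in the
difference of the averages. By induction, `f` oscillates by at most `∏_{m ≥ 2} (κ_m - 1)/(κ_m + 1)`
on `{g > 0}`, which carries the weights. Finally `Kⁿ(s, G_n) = Kⁿ(s, S)` since `k_n` vanishes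
off `F_n × G_n`.
-/

open Set

theorem sub_le_of_mul_sub_le_sq_mul {κ x y d : ℝ} (hκ : 1 ≤ κ) (hxd : x ≤ d)
    (hy : 0 ≤ y) (h : x * (d - y) ≤ κ ^ 2 * (y * (d - x))) :
    x - y ≤ (κ - 1) / (κ + 1) * d := by
  rw [div_mul_eq_mul_div, le_div_iff₀ (by linarith)]
  rcases le_or_gt (x - y) 0 with hxy | hxy
  · nlinarith
  have amgm : 4 * (x * (d - y)) ≤ (d + (x - y)) ^ 2 := by nlinarith [sq_nonneg (d - x - y)]
  have hcr : κ ^ 2 * (d * (x - y)) ≤ (κ ^ 2 - 1) * (x * (d - y)) := by linear_combination h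
  have hκ2 : 0 ≤ κ ^ 2 - 1 := by nlinarith
  -- `(κ² - 1)(d + z)² - 4κ² d z` with `z = x - y` factors as follows
  have hquad : 0 ≤ ((κ + 1) * d - (κ - 1) * (x - y)) * ((κ - 1) * d - (κ + 1) * (x - y)) := by
    nlinarith [mul_le_mul_of_nonneg_left amgm hκ2]
  have := nonneg_of_mul_nonneg_right hquad (by nlinarith)
  linarith

theorem div_sub_div_le_of_mul_sub_le {κ m M a₁ a₂ ω₁ ω₂ : ℝ} (hκ : 1 ≤ κ) (hω₁ : 0 < ω₁)
    (hω₂ : 0 < ω₂) (hM₁ : a₁ ≤ M * ω₁) (hm₂ : m * ω₂ ≤ a₂)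
    (h : (a₁ - m * ω₁) * (M * ω₂ - a₂) ≤ κ ^ 2 * ((a₂ - m * ω₂) * (M * ω₁ - a₁))) :
    a₁ / ω₁ - a₂ / ω₂ ≤ (κ - 1) / (κ + 1) * (M - m) := by
  have hx : a₁ / ω₁ - m = (a₁ - m * ω₁) / ω₁ := by field_simp
  have hy : a₂ / ω₂ - m = (a₂ - m * ω₂) / ω₂ := by field_simp
  have hdx : M - m - (a₁ / ω₁ - m) = (M * ω₁ - a₁) / ω₁ := by
    field_simp
    ring
  have hdy : M - m - (a₂ / ω₂ - m) = (M * ω₂ - a₂) / ω₂ := by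
    field_simp
    ring
  have key := sub_le_of_mul_sub_le_sq_mul (x := a₁ / ω₁ - m) (y := a₂ / ω₂ - m) (d := M - m) hκ
    (by rw [sub_le_sub_iff_right, div_le_iff₀ hω₁]; exact hM₁)
    (by rw [hy]; exact div_nonneg (sub_nonneg.2 hm₂) hω₂.le)
    (by
      rw [hdx, hdy, hx, hy, div_mul_div_comm, div_mul_div_comm, ← mul_div_assoc,
        mul_comm ω₂ ω₁]
      exact div_le_div_of_nonneg_right h (by positivity))
  linarith

theorem exists_nonneg_forall_mem_Icc_add {α : Type*} {φ : α → ℝ} {P : Set α} {D : ℝ}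
    (hφ : ∀ t ∈ P, 0 ≤ φ t) (h : ∀ t ∈ P, ∀ u ∈ P, φ t - φ u ≤ D) :
    ∃ m, 0 ≤ m ∧ ∀ t ∈ P, φ t ∈ Icc m (m + D) := by
  refine ⟨sInf (φ '' P), Real.sInf_nonneg (forall_mem_image.2 hφ), fun t ht =>
    ⟨csInf_le ⟨0, forall_mem_image.2 hφ⟩ (mem_image_of_mem φ ht), ?_⟩⟩
  rw [← sub_le_iff_le_add]
  exact le_csInf ⟨_, mem_image_of_mem φ ht⟩ (forall_mem_image.2 fun u hu => by
    linarith [h t ht u hu])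

section Hopf

variable {S : Type*} [MeasurableSpace S] {lam : Measure S}

theorem lintegral_mul_lintegral_le_of_cross {v₁ v₂ X Y : S → ℝ≥0∞} {C : ℝ≥0∞}
    (hv₁ : Measurable v₁) (hv₂ : Measurable v₂) (hX : Measurable X) (hY : Measurable Y)
    (h : ∀ t u, v₁ t * v₂ u ≤ C * (v₂ t * v₁ u)) :
    (∫⁻ t, v₁ t * X t ∂lam) * ∫⁻ u, v₂ u * Y u ∂lam ≤
      C * ((∫⁻ t, v₂ t * X t ∂lam) * ∫⁻ u, v₁ u * Y u ∂lam) := by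
  have hv₂X : Measurable fun t => v₂ t * X t := hv₂.mul hX
  have hv₁Y : Measurable fun u => v₁ u * Y u := hv₁.mul hY
  calc (∫⁻ t, v₁ t * X t ∂lam) * ∫⁻ u, v₂ u * Y u ∂lam
      ≤ ∫⁻ u, ∫⁻ t, v₁ t * X t * (v₂ u * Y u) ∂lam ∂lam :=
        (lintegral_const_mul_le _ _).trans (lintegral_mono fun u => lintegral_mul_const_le _ _)
    _ ≤ ∫⁻ u, ∫⁻ t, C * (v₁ u * Y u) * (v₂ t * X t) ∂lam ∂lam := by
        refine lintegral_mono fun u => lintegral_mono fun t => ?_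
        calc v₁ t * X t * (v₂ u * Y u) = v₁ t * v₂ u * (X t * Y u) := by ring
          _ ≤ C * (v₂ t * v₁ u) * (X t * Y u) := mul_le_mul_left (h t u) _
          _ = C * (v₁ u * Y u) * (v₂ t * X t) := by ring
    _ = C * ((∫⁻ t, v₂ t * X t ∂lam) * ∫⁻ u, v₁ u * Y u ∂lam) := by
        simp_rw [lintegral_const_mul _ hv₂X]
        rw [lintegral_mul_const _ (hv₁Y.const_mul C), lintegral_const_mul _ hv₁Y]
        ring

theorem lintegral_mul_tsub_add {w a b : S → ℝ≥0∞} (hw : Measurable w) (ha : Measurable a)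
    (hab : ∀ t, w t ≠ 0 → a t ≤ b t) :
    ∫⁻ t, w t * (b t - a t) ∂lam + ∫⁻ t, w t * a t ∂lam = ∫⁻ t, w t * b t ∂lam := by
  have hwa : Measurable fun t => w t * a t := hw.mul ha
  rw [← lintegral_add_right _ hwa]
  refine lintegral_congr fun t => ?_
  rcases eq_or_ne (w t) 0 with ht | ht
  · simp [ht]
  · rw [← mul_add, tsub_add_cancel_of_le (hab t ht)]

theorem lintegral_mul_tsub_toReal {w f : S → ℝ≥0∞} {m M : ℝ≥0∞} (hw : Measurable w)
    (hf : Measurable f) (hM : M ≠ ⊤) (hW : ∫⁻ t, w t ∂lam ≠ ⊤)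
    (hfw : ∀ t, w t ≠ 0 → f t ∈ Icc m M) :
    ∫⁻ t, w t * (f t - m) ∂lam ≠ ⊤ ∧ ∫⁻ t, w t * (M - f t) ∂lam ≠ ⊤ ∧
      (∫⁻ t, w t * (f t - m) ∂lam).toReal =
        (∫⁻ t, w t * f t ∂lam).toReal - m.toReal * (∫⁻ t, w t ∂lam).toReal ∧
      (∫⁻ t, w t * (M - f t) ∂lam).toReal =
        M.toReal * (∫⁻ t, w t ∂lam).toReal - (∫⁻ t, w t * f t ∂lam).toReal := by
  have hlow := lintegral_mul_tsub_add (lam := lam) hw measurable_const fun t ht => (hfw t ht).1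
  have hup := lintegral_mul_tsub_add (lam := lam) hw hf fun t ht => (hfw t ht).2
  rw [lintegral_mul_const _ hw] at hlow hup
  obtain ⟨hQ, hA⟩ := ENNReal.add_ne_top.1 (hup ▸ ENNReal.mul_ne_top hW hM)
  obtain ⟨hP, hmW⟩ := ENNReal.add_ne_top.1 (hlow ▸ hA)
  replace hlow := congrArg ENNReal.toReal hlow
  replace hup := congrArg ENNReal.toReal hup
  rw [ENNReal.toReal_add hP hmW, ENNReal.toReal_mul] at hlow
  rw [ENNReal.toReal_add hQ hA, ENNReal.toReal_mul] at hup
  exact ⟨hP, hQ, by linarith, by linarith⟩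

theorem toReal_lintegral_div_sub_le {w₁ w₂ f : S → ℝ≥0∞} {m M : ℝ≥0∞} {κ : ℝ} (hκ : 1 ≤ κ)
    (hw₁ : Measurable w₁) (hw₂ : Measurable w₂) (hf : Measurable f) (hM : M ≠ ⊤)
    (hf₁ : ∀ t, w₁ t ≠ 0 → f t ∈ Icc m M) (hf₂ : ∀ t, w₂ t ≠ 0 → f t ∈ Icc m M)
    (hcross : ∀ t u, w₁ t * w₂ u ≤ ENNReal.ofReal (κ ^ 2) * (w₂ t * w₁ u))
    (hW₁ : 0 < ∫⁻ t, w₁ t ∂lam) (hW₁' : ∫⁻ t, w₁ t ∂lam ≠ ⊤)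
    (hW₂ : 0 < ∫⁻ t, w₂ t ∂lam) (hW₂' : ∫⁻ t, w₂ t ∂lam ≠ ⊤) :
    (∫⁻ t, w₁ t * f t ∂lam).toReal / (∫⁻ t, w₁ t ∂lam).toReal -
        (∫⁻ t, w₂ t * f t ∂lam).toReal / (∫⁻ t, w₂ t ∂lam).toReal ≤
      (κ - 1) / (κ + 1) * (M.toReal - m.toReal) := by
  obtain ⟨-, hQ₁, hP₁_eq, hQ₁_eq⟩ := lintegral_mul_tsub_toReal hw₁ hf hM hW₁' hf₁
  obtain ⟨hP₂, -, hP₂_eq, hQ₂_eq⟩ := lintegral_mul_tsub_toReal hw₂ hf hM hW₂' hf₂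
  have hcr := ENNReal.toReal_mono (ENNReal.mul_ne_top ENNReal.ofReal_ne_top
    (ENNReal.mul_ne_top hP₂ hQ₁)) (lintegral_mul_lintegral_le_of_cross (lam := lam) hw₁ hw₂
      (hf.sub measurable_const) (measurable_const.sub hf) hcross)
  simp only [ENNReal.toReal_mul, ENNReal.toReal_ofReal (sq_nonneg κ)] at hcr
  rw [hP₁_eq, hQ₂_eq, hP₂_eq, hQ₁_eq] at hcr
  have hQ₁_nonneg := hQ₁_eq ▸ ENNReal.toReal_nonneg
  have hP₂_nonneg := hP₂_eq ▸ ENNReal.toReal_nonneg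
  exact div_sub_div_le_of_mul_sub_le hκ (ENNReal.toReal_pos hW₁.ne' hW₁')
    (ENNReal.toReal_pos hW₂.ne' hW₂') (by linarith) (by linarith) (by linarith)

theorem abs_toReal_lintegral_div_sub_le {w₁ w₂ f : S → ℝ≥0∞} {m M : ℝ≥0∞} {κ : ℝ}
    (hκ : 1 ≤ κ) (hw₁ : Measurable w₁) (hw₂ : Measurable w₂) (hf : Measurable f) (hM : M ≠ ⊤)
    (hf₁ : ∀ t, w₁ t ≠ 0 → f t ∈ Icc m M) (hf₂ : ∀ t, w₂ t ≠ 0 → f t ∈ Icc m M)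
    (hcross : ∀ t u, w₁ t * w₂ u ≤ ENNReal.ofReal (κ ^ 2) * (w₂ t * w₁ u))
    (hW₁ : 0 < ∫⁻ t, w₁ t ∂lam) (hW₁' : ∫⁻ t, w₁ t ∂lam ≠ ⊤)
    (hW₂ : 0 < ∫⁻ t, w₂ t ∂lam) (hW₂' : ∫⁻ t, w₂ t ∂lam ≠ ⊤) :
    |(∫⁻ t, w₁ t * f t ∂lam).toReal / (∫⁻ t, w₁ t ∂lam).toReal -
        (∫⁻ t, w₂ t * f t ∂lam).toReal / (∫⁻ t, w₂ t ∂lam).toReal| ≤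
      (κ - 1) / (κ + 1) * (M.toReal - m.toReal) := by
  refine abs_sub_le_iff.2
    ⟨toReal_lintegral_div_sub_le hκ hw₁ hw₂ hf hM hf₁ hf₂ hcross hW₁ hW₁' hW₂ hW₂',
      toReal_lintegral_div_sub_le hκ hw₂ hw₁ hf hM hf₂ hf₁ (fun t u => ?_) hW₂ hW₂' hW₁ hW₁'⟩
  calc w₂ t * w₁ u = w₁ u * w₂ t := mul_comm _ _
    _ ≤ ENNReal.ofReal (κ ^ 2) * (w₂ u * w₁ t) := hcross u t
    _ = ENNReal.ofReal (κ ^ 2) * (w₁ t * w₂ u) := by rw [mul_comm (w₂ u)]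

end Hopf

section Kernels

variable {S : Type*}

structure IsDensityKernel [MeasurableSpace S] (lam : Measure S) (k : S → S → ℝ≥0) : Prop where
  measurable : Measurable fun p : S × S => k p.1 p.2
  lintegral_le : ∃ C : ℝ≥0∞, C < ⊤ ∧ ∀ s, ∫⁻ t, (k s t : ℝ≥0∞) ∂lam ≤ C

structure IsRectangularKernel (k : S → S → ℝ≥0) (F G : Set S) (κ : ℝ) : Prop where
  one_le : 1 ≤ κ
  eq_zero : ∀ s t, (s, t) ∉ F ×ˢ G → k s t = 0
  cross_le : ∀ s₁ ∈ F, ∀ s₂ ∈ F, ∀ t₁ ∈ G, ∀ t₂ ∈ G,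
    (k s₁ t₁ : ℝ) * (k s₂ t₂ : ℝ) ≤ κ ^ 2 * ((k s₂ t₁ : ℝ) * (k s₁ t₂ : ℝ))

theorem IsRectangularKernel.coe_mul_coe_le {k : S → S → ℝ≥0} {F G : Set S} {κ : ℝ}
    (h : IsRectangularKernel k F G κ) {s₁ s₂ : S} (hs₁ : s₁ ∈ F)
    (hs₂ : s₂ ∈ F) (t u : S) :
    (k s₁ t : ℝ≥0∞) * k s₂ u ≤ ENNReal.ofReal (κ ^ 2) * (k s₂ t * k s₁ u) := by
  by_cases ht : t ∈ G
  · by_cases hu : u ∈ G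
    · rw [ENNReal.ofReal, ← ENNReal.coe_mul, ← ENNReal.coe_mul, ← ENNReal.coe_mul,
        ENNReal.coe_le_coe, ← NNReal.coe_le_coe]
      push_cast [Real.coe_toNNReal _ (sq_nonneg κ)]
      exact h.cross_le s₁ hs₁ s₂ hs₂ t ht u hu
    · simp [h.eq_zero s₂ u fun hsu => hu hsu.2]
  · simp [h.eq_zero s₁ t fun hst => ht hst.2]

theorem IsRectangularKernel.coe_mul_mul_coe_mul_le {k : S → S → ℝ≥0} {F G : Set S} {κ : ℝ}
    (h : IsRectangularKernel k F G κ) (g : S → ℝ≥0∞) {s₁ s₂ : S} (hs₁ : s₁ ∈ F)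
    (hs₂ : s₂ ∈ F) (t u : S) :
    (k s₁ t : ℝ≥0∞) * g t * (k s₂ u * g u) ≤
      ENNReal.ofReal (κ ^ 2) * (k s₂ t * g t * (k s₁ u * g u)) :=
  calc (k s₁ t : ℝ≥0∞) * g t * (k s₂ u * g u) = k s₁ t * k s₂ u * (g t * g u) := by ring
    _ ≤ ENNReal.ofReal (κ ^ 2) * (k s₂ t * k s₁ u) * (g t * g u) :=
      mul_le_mul_left (h.coe_mul_coe_le hs₁ hs₂ t u) _
    _ = ENNReal.ofReal (κ ^ 2) * (k s₂ t * g t * (k s₁ u * g u)) := by ring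

variable [MeasurableSpace S] {lam : Measure S}

theorem IsRectangularKernel.mem_of_compKer_cons_pos {k : S → S → ℝ≥0} {F G : Set S} {κ : ℝ}
    (h : IsRectangularKernel k F G κ) {ks : List (S → S → ℝ≥0)}
    {s : S} {E : Set S} (hpos : 0 < compKer lam (k :: ks) s E) : s ∈ F := by
  by_contra hs
  have hk : ∀ t, k s t = 0 := fun t => h.eq_zero s t fun hst => hs hst.1
  simp [compKer, hk] at hpos

section compKer

variable {ks : List (S → S → ℝ≥0)}

theorem compKer_mono {E E' : Set S} (h : E ⊆ E') (s : S) :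
    compKer lam ks s E ≤ compKer lam ks s E' := by
  induction ks generalizing s with
  | nil => exact indicator_le_indicator_of_subset (f := fun _ => (1 : ℝ≥0∞)) h (fun _ => zero_le) s
  | cons k ks ih => exact lintegral_mono fun t => mul_le_mul_right (ih t) _

theorem measurable_compKer [SFinite lam]
    (hks : ∀ k ∈ ks, Measurable fun p : S × S => k p.1 p.2) {E : Set S} (hE : MeasurableSet E) :
    Measurable fun s => compKer lam ks s E := by
  induction ks with
  | nil => exact measurable_const.indicator hE
  | cons k ks ih =>
    have hk := (hks k List.mem_cons_self).coe_nnreal_ennreal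
    exact (hk.mul ((ih fun k' hk' => hks k' (List.mem_cons_of_mem _ hk')).comp
      measurable_snd)).lintegral_prod_right'

theorem exists_compKer_le (hks : ∀ k ∈ ks, IsDensityKernel lam k) :
    ∃ C : ℝ≥0∞, C < ⊤ ∧ ∀ s E, compKer lam ks s E ≤ C := by
  induction ks with
  | nil => exact ⟨1, ENNReal.one_lt_top, fun s E =>
    indicator_le (f := fun _ => (1 : ℝ≥0∞)) (g := 1) (fun _ _ => le_rfl) s⟩
  | cons k ks ih =>
    obtain ⟨C, hC, hCle⟩ := ih fun k' hk' => hks k' (List.mem_cons_of_mem _ hk')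
    obtain ⟨C₀, hC₀, hC₀le⟩ := (hks k List.mem_cons_self).lintegral_le
    refine ⟨C₀ * C, ENNReal.mul_lt_top hC₀ hC, fun s E => ?_⟩
    calc ∫⁻ t, (k s t : ℝ≥0∞) * compKer lam ks t E ∂lam
        ≤ ∫⁻ t, (k s t : ℝ≥0∞) * C ∂lam := lintegral_mono fun t => mul_le_mul_right (hCle t E) _
      _ = (∫⁻ t, (k s t : ℝ≥0∞) ∂lam) * C := lintegral_mul_const _
          ((hks k List.mem_cons_self).measurable.comp measurable_prodMk_left).coe_nnreal_ennreal
      _ ≤ C₀ * C := mul_le_mul_left (hC₀le s) _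

theorem compKer_ne_top (hks : ∀ k ∈ ks, IsDensityKernel lam k) (s : S) (E : Set S) :
    compKer lam ks s E ≠ ⊤ :=
  let ⟨_, hC, hle⟩ := exists_compKer_le hks
  ((hle s E).trans_lt hC).ne

theorem compKer_cons_eq_lintegral_mul_div (k : S → S → ℝ≥0)
    (hks : ∀ t, compKer lam ks t univ ≠ ⊤) (s : S) (E : Set S) :
    compKer lam (k :: ks) s E = ∫⁻ t, k s t * compKer lam ks t univ *
      (compKer lam ks t E / compKer lam ks t univ) ∂lam := by
  refine lintegral_congr fun t => ?_
  rw [mul_assoc, ENNReal.mul_div_cancel'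
    (fun h => le_antisymm (h ▸ compKer_mono (subset_univ E) t) zero_le)
    (fun h => absurd h (hks t))]

theorem compKer_append_singleton_univ {kl : S → S → ℝ≥0} {G : Set S}
    (hkl : ∀ s t, t ∉ G → kl s t = 0) (s : S) :
    compKer lam (ks ++ [kl]) s univ = compKer lam (ks ++ [kl]) s G := by
  induction ks generalizing s with
  | nil =>
    refine lintegral_congr fun t => ?_
    by_cases ht : t ∈ G
    · simp [compKer, ht]
    · simp [hkl s t ht]
  | cons k ks ih => exact lintegral_congr fun t => congrArg _ (ih t)

end compKer

theorem compKer_ofFn_last {n : ℕ} {k : Fin (n + 1) → S → S → ℝ≥0} {G : Set S}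
    (hk : ∀ s t, t ∉ G → k (Fin.last n) s t = 0) (s : S) :
    compKer lam (List.ofFn k) s univ = compKer lam (List.ofFn k) s G := by
  rw [List.ofFn_succ', List.concat_eq_append]
  exact compKer_append_singleton_univ hk s

noncomputable def compKerRatio (lam : Measure S) (ks : List (S → S → ℝ≥0)) (s : S)
    (E : Set S) : ℝ :=
  (compKer lam ks s E).toReal / (compKer lam ks s univ).toReal

theorem abs_compKerRatio_cons_sub_le [SFinite lam] {k : S → S → ℝ≥0}
    {ks : List (S → S → ℝ≥0)} {F G : Set S} {κ D : ℝ} {E : Set S} (hk : IsDensityKernel lam k)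
    (hks : ∀ k ∈ ks, IsDensityKernel lam k) (hrect : IsRectangularKernel k F G κ)
    (hE : MeasurableSet E) (hD : 0 ≤ D)
    (htail : ∀ t u, 0 < compKer lam ks t univ → 0 < compKer lam ks u univ →
      |compKerRatio lam ks t E - compKerRatio lam ks u E| ≤ D)
    {s₁ s₂ : S} (h₁ : 0 < compKer lam (k :: ks) s₁ univ)
    (h₂ : 0 < compKer lam (k :: ks) s₂ univ) :
    |compKerRatio lam (k :: ks) s₁ E - compKerRatio lam (k :: ks) s₂ E| ≤
      (κ - 1) / (κ + 1) * D := by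
  set g : S → ℝ≥0∞ := fun t => compKer lam ks t univ
  set f : S → ℝ≥0∞ := fun t => compKer lam ks t E / g t
  have hks_meas : ∀ k ∈ ks, Measurable fun p : S × S => k p.1 p.2 :=
    fun k hk => (hks k hk).measurable
  have hg : Measurable g := measurable_compKer hks_meas MeasurableSet.univ
  have hf : Measurable f := (measurable_compKer hks_meas hE).div hg
  have hf_top : ∀ t, f t ≠ ⊤ := fun t => ne_top_of_le_ne_top ENNReal.one_ne_top
    (ENNReal.div_le_of_le_mul (by rw [one_mul]; exact compKer_mono (subset_univ E) t))
  obtain ⟨m, hm, hfm⟩ := exists_nonneg_forall_mem_Icc_add (φ := fun t => (f t).toReal)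
    (P := {t | g t ≠ 0}) (fun _ _ => ENNReal.toReal_nonneg) fun t ht u hu => by
      have := (abs_sub_le_iff.1 (htail t u (pos_iff_ne_zero.2 ht) (pos_iff_ne_zero.2 hu))).1
      simpa only [compKerRatio, f, ENNReal.toReal_div] using this
  have hf_mem : ∀ s t, (k s t : ℝ≥0∞) * g t ≠ 0 →
      f t ∈ Icc (ENNReal.ofReal m) (ENNReal.ofReal (m + D)) := fun s t hst => by
    obtain ⟨hmt, htM⟩ := hfm t (right_ne_zero_of_mul hst)
    rw [← ENNReal.ofReal_toReal (hf_top t)]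
    exact ⟨ENNReal.ofReal_le_ofReal hmt, ENNReal.ofReal_le_ofReal htM⟩
  have hw : ∀ s, Measurable fun t => (k s t : ℝ≥0∞) * g t := fun s =>
    (hk.measurable.comp measurable_prodMk_left).coe_nnreal_ennreal.mul hg
  have hcross := hrect.coe_mul_mul_coe_mul_le g (hrect.mem_of_compKer_cons_pos h₁)
    (hrect.mem_of_compKer_cons_pos h₂)
  have hfin := compKer_ne_top (lam := lam) (ks := k :: ks) (List.forall_mem_cons.2 ⟨hk, hks⟩)
  have hrepr : ∀ s, compKerRatio lam (k :: ks) s E =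
      (∫⁻ t, k s t * g t * f t ∂lam).toReal / (∫⁻ t, k s t * g t ∂lam).toReal := fun s => by
    rw [compKerRatio, compKer_cons_eq_lintegral_mul_div k (fun t => compKer_ne_top hks t univ)]
    rfl
  have := abs_toReal_lintegral_div_sub_le hrect.one_le (hw s₁) (hw s₂) hf ENNReal.ofReal_ne_top
    (hf_mem s₁) (hf_mem s₂) hcross h₁ (hfin s₁ univ) h₂ (hfin s₂ univ)
  rwa [ENNReal.toReal_ofReal hm, ENNReal.toReal_ofReal (by positivity), add_sub_cancel_left,
    ← hrepr, ← hrepr] at this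

theorem abs_compKerRatio_sub_le_prod [SFinite lam] {n : ℕ} {k : Fin n → S → S → ℝ≥0}
    {F G : Fin n → Set S} {κ : Fin n → ℝ} (hk : ∀ i, IsDensityKernel lam (k i))
    (hrect : ∀ i, IsRectangularKernel (k i) (F i) (G i) (κ i)) {E : Set S}
    (hE : MeasurableSet E) {s₁ s₂ : S} (h₁ : 0 < compKer lam (List.ofFn k) s₁ univ)
    (h₂ : 0 < compKer lam (List.ofFn k) s₂ univ) :
    |compKerRatio lam (List.ofFn k) s₁ E - compKerRatio lam (List.ofFn k) s₂ E| ≤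
      ∏ i, (κ i - 1) / (κ i + 1) := by
  induction n generalizing s₁ s₂ with
  | zero =>
    simp only [List.ofFn_zero, compKerRatio, compKer, Finset.univ_eq_empty, Finset.prod_empty]
    by_cases hs₁ : s₁ ∈ E <;> by_cases hs₂ : s₂ ∈ E <;> simp [hs₁, hs₂]
  | succ n ih =>
    rw [List.ofFn_succ] at h₁ h₂ ⊢
    rw [Fin.prod_univ_succ]
    have hprod : 0 ≤ ∏ i : Fin n, (κ i.succ - 1) / (κ i.succ + 1) :=
      Finset.prod_nonneg fun i _ => div_nonneg (by linarith [(hrect i.succ).one_le])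
        (by linarith [(hrect i.succ).one_le])
    exact abs_compKerRatio_cons_sub_le (hk 0)
      (by simpa [List.mem_ofFn] using fun i : Fin n => hk i.succ) (hrect 0) hE hprod
      (fun t u ht hu => ih (fun i => hk i.succ) (fun i => hrect i.succ) ht hu) h₁ h₂

end Kernels

/-- For density kernels `k₁, …, k_n` with rectangular supports `F_m × G_m`
and cross-ratio bounds `κ_m²`, if `Kⁿ(s,S) > 0` on `F₁`, then for all `s₁, s₂ ∈ F₁` and all
measurable `E`,
`|Kⁿ(s₁,E)/Kⁿ(s₁,G_n) − Kⁿ(s₂,E)/Kⁿ(s₂,G_n)| ≤ ∏_m (κ_m−1)/(κ_m+1)`. -/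
theorem stmt_12 {S : Type*} [MeasurableSpace S]
    (lam : Measure S) [SigmaFinite lam]
    (n : ℕ) (hn : 0 < n)
    (k : Fin n → S → S → ℝ≥0)
    (hkm : ∀ m, Measurable fun p : S × S => k m p.1 p.2)
    (hkb : ∀ m, ∃ C : ℝ≥0∞, C < ⊤ ∧ ∀ s, ∫⁻ t, (k m s t : ℝ≥0∞) ∂lam ≤ C)
    (F G : Fin n → Set S)
    (hsupp : ∀ m, (∀ s ∈ F m, ∀ t ∈ G m, 0 < k m s t) ∧
      ∀ s t, (s, t) ∉ (F m) ×ˢ (G m) → k m s t = 0)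
    (κ : Fin n → ℝ) (hκ : ∀ m, 1 ≤ κ m)
    (hcross : ∀ m, ∀ s₁ ∈ F m, ∀ s₂ ∈ F m, ∀ t₁ ∈ G m, ∀ t₂ ∈ G m,
      (k m s₁ t₁ : ℝ) * (k m s₂ t₂ : ℝ) ≤ (κ m) ^ 2 * ((k m s₂ t₁ : ℝ) * (k m s₁ t₂ : ℝ)))
    (hKpos : ∀ s ∈ F ⟨0, hn⟩, 0 < compKer lam (List.ofFn k) s Set.univ) :
    ∀ s₁ ∈ F ⟨0, hn⟩, ∀ s₂ ∈ F ⟨0, hn⟩, ∀ E : Set S, MeasurableSet E →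
      |(compKer lam (List.ofFn k) s₁ E).toReal /
          (compKer lam (List.ofFn k) s₁ (G ⟨n - 1, by omega⟩)).toReal -
        (compKer lam (List.ofFn k) s₂ E).toReal /
          (compKer lam (List.ofFn k) s₂ (G ⟨n - 1, by omega⟩)).toReal| ≤
        ∏ m, (κ m - 1) / (κ m + 1) := by
  intro s₁ hs₁ s₂ hs₂ E hE
  obtain ⟨n, rfl⟩ := Nat.exists_eq_add_one_of_ne_zero hn.ne'
  have hG : ∀ s, compKer lam (List.ofFn k) s univ =
      compKer lam (List.ofFn k) s (G ⟨n + 1 - 1, by omega⟩) :=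
    compKer_ofFn_last fun s t ht => (hsupp _).2 s t fun hst => ht hst.2
  rw [← hG, ← hG]
  exact abs_compKerRatio_sub_le_prod (fun i => ⟨hkm i, hkb i⟩)
    (fun i => ⟨hκ i, (hsupp i).2, hcross i⟩) hE (hKpos s₁ hs₁) (hKpos s₂ hs₂)
end
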